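/- arXiv:0804.0542 — 3 statements merged into one kernel-verified Lean document; each statement's English description precedes it below -/
import Mathlib

section
/- Assume in addition that each projector Pⱼ (j = 1,…,6) is self-adjoint with respect to the Euclidean inner product on ℝⁿ. For η₀ ∈ ℝⁿ, let η(x) := (Y(x;x₀)⁻¹)*η₀ (the solution of the adjoint system η′ = −(A*/x + B(x)*)η with η(x₀) = η₀). Then ∫₀^{∞} ‖η(x)‖ dx < ∞ if and only if (P₅+P₆)η₀ = η₀. -/
/-!
The adjoint solution `η(x) = (Y(x)⁻¹)* η₀` satisfies `⟪η(x), Y(x) ξ⟫ = ⟪η₀, ξ⟫`. For a self-adjoint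
projection `P`, taking `ξ = P η₀` gives `‖P η₀‖ ≤ ‖η(x)‖ ‖Y(x) P‖`, so `η` is large wherever
`Y(x) P` is small: integrability of `η` forces `(P₁ + P₂ + P₃) η₀ = 0`, since `Y(x) P₋` stays
bounded at `∞`, and `(P₁ + P₄) η₀ = 0`, since `Y(x) Q₊ = O(x^{1+α})` at `0`.
Conversely, if `(P₅ + P₆) η₀ = η₀` then `η(x) = ((P₅ + P₆) Y(x)⁻¹)* η₀`, and `P₅ + P₆` factors
through `Q₋` and through `P₊`; the dichotomy bounds at `x₀` then give `η(x) = O(x^{α-1})` at `0`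
and exponential decay at `∞`.
-/

open MeasureTheory Set ContinuousLinearMap
open scoped InnerProductSpace

section

variable {E : Type*} [NormedAddCommGroup E] [InnerProductSpace ℝ E] [CompleteSpace E]

namespace ContinuousLinearMap

theorem inner_adjoint_inverse_apply_apply {T : E →L[ℝ] E} (hT : IsUnit T) (η ξ : E) :
    ⟪adjoint (Ring.inverse T) η, T ξ⟫_ℝ = ⟪η, ξ⟫_ℝ := by
  rw [adjoint_inner_left]
  congr 1
  simpa using congr($(Ring.inverse_mul_cancel T hT) ξ)

theorem norm_apply_le_norm_adjoint_inverse_apply_mul {T P : E →L[ℝ] E} (hT : IsUnit T)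
    (hP : IsStarProjection P) (η : E) :
    ‖P η‖ ≤ ‖adjoint (Ring.inverse T) η‖ * ‖T ∘L P‖ := by
  have hPP : P (P η) = P η := congr($(hP.isIdempotentElem) η)
  have hsq : ‖P η‖ * ‖P η‖ ≤ ‖adjoint (Ring.inverse T) η‖ * ‖T ∘L P‖ * ‖P η‖ :=
    calc ‖P η‖ * ‖P η‖ = ⟪η, P η⟫_ℝ := by
          rw [← real_inner_self_eq_norm_mul_norm, ← adjoint_inner_right,
            hP.isSelfAdjoint.adjoint_eq, hPP]
      _ = ⟪adjoint (Ring.inverse T) η, (T ∘L P) (P η)⟫_ℝ := by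
          rw [comp_apply, hPP, inner_adjoint_inverse_apply_apply hT]
      _ ≤ ‖adjoint (Ring.inverse T) η‖ * ‖(T ∘L P) (P η)‖ := real_inner_le_norm _ _
      _ ≤ ‖adjoint (Ring.inverse T) η‖ * ‖T ∘L P‖ * ‖P η‖ := by
          rw [mul_assoc]; gcongr; exact le_opNorm _ _
  rcases (norm_nonneg (P η)).eq_or_lt with h0 | hpos
  · rw [← h0]; positivity
  · exact le_of_mul_le_mul_right hsq hpos

theorem norm_adjoint_apply_le_of_isSelfAdjoint {P : E →L[ℝ] E} (hP : IsSelfAdjoint P) {η : E}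
    (hη : P η = η) (R : E →L[ℝ] E) : ‖adjoint R η‖ ≤ ‖P ∘L R‖ * ‖η‖ :=
  calc ‖adjoint R η‖ = ‖adjoint (P ∘L R) η‖ := by
        rw [adjoint_comp, comp_apply, ← star_eq_adjoint P, hP.star_eq, hη]
    _ ≤ ‖adjoint (P ∘L R)‖ * ‖η‖ := le_opNorm _ _
    _ = ‖P ∘L R‖ * ‖η‖ := by rw [LinearIsometryEquiv.norm_map]

end ContinuousLinearMap

theorem continuousOn_adjoint_inverse_apply {Y : ℝ → E →L[ℝ] E} {s : Set ℝ}
    (hY : ContinuousOn Y s) (hYu : ∀ x ∈ s, IsUnit (Y x)) (η : E) :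
    ContinuousOn (fun x => adjoint (Ring.inverse (Y x)) η) s := by
  intro x hx
  have hinv : ContinuousAt Ring.inverse (Y x) := by
    simpa using NormedRing.inverse_continuousAt (hYu x hx).unit
  exact ((adjoint.continuous.continuousAt.comp hinv).comp_continuousWithinAt
    (hY x hx)).clm_apply continuousWithinAt_const

theorem nonpos_of_mul_le_norm_of_not_integrableOn {α F : Type*} [MeasurableSpace α]
    [NormedAddCommGroup F] {μ : Measure α} {s : Set α} {f : α → F} {h : α → ℝ} {c : ℝ}
    (hs : MeasurableSet s) (hf : IntegrableOn f s μ)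
    (hhm : AEStronglyMeasurable h (μ.restrict s)) (hh : ∀ x ∈ s, 0 ≤ h x)
    (hle : ∀ x ∈ s, c * h x ≤ ‖f x‖) (hni : ¬ IntegrableOn h s μ) : c ≤ 0 := by
  by_contra! hc
  refine hni ((hf.norm.const_mul c⁻¹).mono' hhm ?_)
  filter_upwards [ae_restrict_mem hs] with x hx
  rw [Real.norm_of_nonneg (hh x hx), le_inv_mul_iff₀ hc]
  exact hle x hx

theorem integrableOn_Ioi_exp_neg_mul_sub {a γ : ℝ} (hγ : 0 < γ) :
    IntegrableOn (fun x => Real.exp (-(γ * (x - a)))) (Ioi a) :=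
  IntegrableOn.congr_fun ((exp_neg_integrableOn_Ioi a hγ).const_mul (Real.exp (γ * a)))
    (fun x _ => by rw [← Real.exp_add]; ring_nf) measurableSet_Ioi

theorem integrableOn_Ioo_div_rpow_iff {a p : ℝ} (ha : 0 < a) :
    IntegrableOn (fun x => (a / x) ^ p) (Ioo 0 a) ↔ p < 1 := by
  have heq : EqOn (fun x => (a / x) ^ p) (fun x => a ^ p * x ^ (-p)) (Ioo 0 a) :=
    fun x hx => by
      dsimp only
      rw [Real.div_rpow ha.le hx.1.le, Real.rpow_neg hx.1.le, div_eq_mul_inv]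
  rw [integrableOn_congr_fun heq measurableSet_Ioo, IntegrableOn,
    integrable_const_mul_iff (Real.rpow_pos_of_pos ha p).ne'.isUnit, ← IntegrableOn,
    intervalIntegral.integrableOn_Ioo_rpow_iff ha, neg_lt_neg_iff]

theorem apply_eq_zero_of_integrableOn_adjoint_inverse_apply {Y : ℝ → E →L[ℝ] E} {P : E →L[ℝ] E}
    {s : Set ℝ} {g : ℝ → ℝ} (hP : IsStarProjection P) (hs : MeasurableSet s)
    (hYu : ∀ x ∈ s, IsUnit (Y x)) (hg : ∀ x ∈ s, 0 < g x) (hYP : ∀ x ∈ s, ‖Y x ∘L P‖ ≤ g x)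
    (hgm : AEStronglyMeasurable (fun x => (g x)⁻¹) (volume.restrict s))
    (hgi : ¬ IntegrableOn (fun x => (g x)⁻¹) s) {η : E}
    (hη : IntegrableOn (fun x => adjoint (Ring.inverse (Y x)) η) s) : P η = 0 := by
  refine norm_le_zero_iff.1 <| nonpos_of_mul_le_norm_of_not_integrableOn hs hη hgm
    (fun x hx => (inv_pos.2 (hg x hx)).le) (fun x hx => ?_) hgi
  rw [← div_eq_mul_inv, div_le_iff₀ (hg x hx)]
  exact (norm_apply_le_norm_adjoint_inverse_apply_mul (hYu x hx) hP η).trans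
    (mul_le_mul_of_nonneg_left (hYP x hx) (norm_nonneg _))

theorem apply_eq_zero_of_integrableOn_Ioi_of_norm_comp_le_exp {Y : ℝ → E →L[ℝ] E}
    {P : E →L[ℝ] E} {a C γ : ℝ} (hP : IsStarProjection P) (hYu : ∀ x ∈ Ioi a, IsUnit (Y x))
    (hC : 0 < C) (hγ : 0 ≤ γ) (hYP : ∀ x ∈ Ioi a, ‖Y x ∘L P‖ ≤ C * Real.exp (-(γ * (x - a))))
    {η : E} (hη : IntegrableOn (fun x => adjoint (Ring.inverse (Y x)) η) (Ioi a)) : P η = 0 := by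
  refine apply_eq_zero_of_integrableOn_adjoint_inverse_apply (g := fun _ => C) hP
    measurableSet_Ioi hYu (fun _ _ => hC) (fun x hx => (hYP x hx).trans ?_)
    aestronglyMeasurable_const (by simp [integrableOn_const_iff, hC.ne']) hη
  have hxa : 0 ≤ x - a := sub_nonneg.2 (mem_Ioi.1 hx).le
  exact mul_le_of_le_one_right hC.le (Real.exp_le_one_iff.2 (by nlinarith))

theorem apply_eq_zero_of_integrableOn_Ioo_of_norm_comp_le_rpow {Y : ℝ → E →L[ℝ] E}
    {P : E →L[ℝ] E} {a C p : ℝ} (hP : IsStarProjection P) (ha : 0 < a)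
    (hYu : ∀ x ∈ Ioo 0 a, IsUnit (Y x)) (hC : 0 < C) (hp : 1 ≤ p)
    (hYP : ∀ x ∈ Ioo 0 a, ‖Y x ∘L P‖ ≤ C * (x / a) ^ p) {η : E}
    (hη : IntegrableOn (fun x => adjoint (Ring.inverse (Y x)) η) (Ioo 0 a)) : P η = 0 := by
  refine apply_eq_zero_of_integrableOn_adjoint_inverse_apply hP measurableSet_Ioo hYu
    (fun x hx => by have := div_pos hx.1 ha; positivity) hYP
    (Measurable.aestronglyMeasurable (by fun_prop)) (fun hint => ?_) hη
  have hinv : EqOn (fun x => C * (C * (x / a) ^ p)⁻¹) (fun x => (a / x) ^ p) (Ioo 0 a) :=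
    fun x hx => by
      dsimp only
      rw [mul_inv, ← mul_assoc, mul_inv_cancel₀ hC.ne', one_mul,
        ← Real.inv_rpow (div_pos hx.1 ha).le, inv_div]
  have := (integrableOn_Ioo_div_rpow_iff ha).1 <|
    IntegrableOn.congr_fun (hint.const_mul C) hinv measurableSet_Ioo
  linarith

theorem integrableOn_adjoint_inverse_apply {Y : ℝ → E →L[ℝ] E} {W V Q : E →L[ℝ] E} {s : Set ℝ}
    {g : ℝ → ℝ} (hW : IsSelfAdjoint W) (hVQ : V ∘L Q = W) (hs : MeasurableSet s)
    (hY : ContinuousOn Y s) (hYu : ∀ x ∈ s, IsUnit (Y x)) (hg : IntegrableOn g s)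
    (hQY : ∀ x ∈ s, ‖Q ∘L Ring.inverse (Y x)‖ ≤ g x) {η : E} (hη : W η = η) :
    IntegrableOn (fun x => adjoint (Ring.inverse (Y x)) η) s := by
  refine ((hg.const_mul ‖V‖).mul_const ‖η‖).mono'
    ((continuousOn_adjoint_inverse_apply hY hYu η).aestronglyMeasurable hs) ?_
  filter_upwards [ae_restrict_mem hs] with x hx
  calc ‖adjoint (Ring.inverse (Y x)) η‖ ≤ ‖W ∘L Ring.inverse (Y x)‖ * ‖η‖ :=
        norm_adjoint_apply_le_of_isSelfAdjoint hW hη _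
    _ ≤ ‖V‖ * g x * ‖η‖ := by
        gcongr
        rw [← hVQ, comp_assoc]
        exact (opNorm_comp_le _ _).trans (by gcongr; exact hQY x hx)

end

theorem adjoint_solution_integrable_iff_general (n : ℕ)
    (A : EuclideanSpace ℝ (Fin n) →L[ℝ] EuclideanSpace ℝ (Fin n))
    (B : ℝ → EuclideanSpace ℝ (Fin n) →L[ℝ] EuclideanSpace ℝ (Fin n))
    (x₀ : ℝ) (hx₀ : 0 < x₀)
    (Y : ℝ → EuclideanSpace ℝ (Fin n) →L[ℝ] EuclideanSpace ℝ (Fin n))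
    (hYd : ∀ x > (0 : ℝ), HasDerivAt Y ((x⁻¹ • A + B x) ∘L Y x) x)
    (hYx₀ : Y x₀ = 1) (hYu : ∀ x > (0 : ℝ), IsUnit (Y x))
    (P₁ P₂ P₃ P₄ P₅ P₆ : EuclideanSpace ℝ (Fin n) →L[ℝ] EuclideanSpace ℝ (Fin n))
    (hsum : P₁ + P₂ + P₃ + P₄ + P₅ + P₆ = 1)
    (hidem : ∀ i, ![P₁, P₂, P₃, P₄, P₅, P₆] i ∘L ![P₁, P₂, P₃, P₄, P₅, P₆] i
      = ![P₁, P₂, P₃, P₄, P₅, P₆] i)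
    (hdisj : ∀ i j, i ≠ j →
      ![P₁, P₂, P₃, P₄, P₅, P₆] i ∘L ![P₁, P₂, P₃, P₄, P₅, P₆] j = 0)
    -- the projectors are self-adjoint
    (hsa : ∀ i, ContinuousLinearMap.adjoint (![P₁, P₂, P₃, P₄, P₅, P₆] i)
      = ![P₁, P₂, P₃, P₄, P₅, P₆] i)
    (C₀ α : ℝ) (hC₀ : 0 < C₀) (hα : 0 < α)
    (hQp : ∀ x s : ℝ, 0 < x → x ≤ s → s ≤ x₀ →
      ‖Y x ∘L (P₁ + P₄) ∘L Ring.inverse (Y s)‖ ≤ C₀ * (x / s) ^ (1 + α))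
    (hQm : ∀ x s : ℝ, 0 < s → s ≤ x → x ≤ x₀ →
      ‖Y x ∘L (P₂ + P₃ + P₅ + P₆) ∘L Ring.inverse (Y s)‖ ≤ C₀ * (x / s) ^ (1 - α))
    (Cs γ : ℝ) (hCs : 0 < Cs) (hγ : 0 < γ)
    (hPm : ∀ x s : ℝ, x₀ ≤ s → s ≤ x →
      ‖Y x ∘L (P₁ + P₂ + P₃) ∘L Ring.inverse (Y s)‖ ≤ Cs * Real.exp (-(γ * (x - s))))
    (hPp : ∀ x s : ℝ, x₀ ≤ x → x ≤ s →
      ‖Y x ∘L (P₄ + P₅ + P₆) ∘L Ring.inverse (Y s)‖ ≤ Cs * Real.exp (-(γ * (s - x)))) :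
    ∀ η₀ : EuclideanSpace ℝ (Fin n),
      IntegrableOn
        (fun x => ContinuousLinearMap.adjoint (Ring.inverse (Y x)) η₀) (Set.Ioi 0)
      ↔ (P₅ + P₆) η₀ = η₀ := by
  intro η₀
  simp only [Nat.succ_eq_add_one, Nat.reduceAdd, Fin.forall_fin_succ, Fin.isValue,
    Matrix.cons_val_zero, Matrix.cons_val_succ, Matrix.cons_val_fin_one, forall_const, ne_eq,
    Fin.succ_zero_eq_one, Fin.succ_one_eq_two, Fin.reduceSucc, IsEmpty.forall_iff, and_true,
    not_true_eq_false, zero_ne_one, not_false_eq_true, Fin.reduceEq, true_and, Fin.succ_ne_zero]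
    at hidem hdisj hsa
  have hYinv₀ : Ring.inverse (Y x₀) = 1 := by rw [hYx₀, Ring.inverse_one]
  have hY : ContinuousOn Y (Ioi 0) := fun x hx => (hYd x hx).continuousAt.continuousWithinAt
  rw [← Ioc_union_Ioi_eq_Ioi hx₀.le, integrableOn_union, integrableOn_Ioc_iff_integrableOn_Ioo]
  constructor
  · rintro ⟨hnear, hfar⟩
    have hP₁₂₃ : IsStarProjection (P₁ + P₂ + P₃) :=
      ⟨by simp [IsIdempotentElem, mul_def, add_comp, comp_add, hidem, hdisj],
        by simp [IsSelfAdjoint, star_eq_adjoint, hsa]⟩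
    have hP₁₄ : IsStarProjection (P₁ + P₄) :=
      ⟨by simp [IsIdempotentElem, mul_def, add_comp, comp_add, hidem, hdisj],
        by simp [IsSelfAdjoint, star_eq_adjoint, hsa]⟩
    have h₁₂₃ : (P₁ + P₂ + P₃) η₀ = 0 :=
      apply_eq_zero_of_integrableOn_Ioi_of_norm_comp_le_exp hP₁₂₃
        (fun x hx => hYu x (hx₀.trans hx)) hCs hγ.le
        (fun x hx => by simpa only [hYinv₀, one_def, comp_id] using hPm x x₀ le_rfl hx.le) hfar
    have h₁₄ : (P₁ + P₄) η₀ = 0 :=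
      apply_eq_zero_of_integrableOn_Ioo_of_norm_comp_le_rpow hP₁₄ hx₀ (fun x hx => hYu x hx.1)
        hC₀ (by linarith : 1 ≤ 1 + α)
        (fun x hx => by simpa only [hYinv₀, one_def, comp_id] using hQp x x₀ hx.1 hx.2.le le_rfl)
        hnear
    -- `P₄ = P₄ ∘ (P₁ + P₄)`, so the two vanishing conditions together kill `P₁ + ⋯ + P₄`
    have hdecomp : (1 : EuclideanSpace ℝ (Fin n) →L[ℝ] EuclideanSpace ℝ (Fin n))
        = (P₁ + P₂ + P₃) + P₄ ∘L (P₁ + P₄) + (P₅ + P₆) := by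
      rw [← hsum]; simp [comp_add, hidem, hdisj]; abel
    have := congr($hdecomp η₀)
    rwa [add_apply, add_apply, comp_apply, h₁₂₃, h₁₄, map_zero, zero_add, zero_add,
      one_apply_eq_self, eq_comm] at this
  · intro h₅₆
    have hW : IsSelfAdjoint (P₅ + P₆) := by simp [IsSelfAdjoint, star_eq_adjoint, hsa]
    constructor
    · refine integrableOn_adjoint_inverse_apply hW (V := P₄ + P₅ + P₆)
        (by simp [add_comp, comp_add, hidem, hdisj] : _ ∘L (P₂ + P₃ + P₅ + P₆) = _)
        measurableSet_Ioo (hY.mono Ioo_subset_Ioi_self) (fun x hx => hYu x hx.1)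
        (((integrableOn_Ioo_div_rpow_iff hx₀).2 (by linarith : 1 - α < 1)).const_mul C₀)
        (fun x hx => ?_) h₅₆
      simpa only [hYx₀, one_def, id_comp] using hQm x₀ x hx.1 hx.2.le le_rfl
    · refine integrableOn_adjoint_inverse_apply hW (V := P₂ + P₃ + P₅ + P₆)
        (by simp [add_comp, comp_add, hidem, hdisj] : _ ∘L (P₄ + P₅ + P₆) = _)
        measurableSet_Ioi (hY.mono (Ioi_subset_Ioi hx₀.le)) (fun x hx => hYu x (hx₀.trans hx))
        ((integrableOn_Ioi_exp_neg_mul_sub hγ).const_mul Cs) (fun x hx => ?_) h₅₆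
      simpa only [hYx₀, one_def, id_comp] using hPp x₀ x le_rfl (le_of_lt hx)

/-- the solution `η(x) = (Y(x;x₀)⁻¹)* η₀` of the adjoint system is
Lebesgue integrable on `(0,∞)` iff `(P₅ + P₆) η₀ = η₀`. -/
theorem adjoint_solution_integrable_iff (n : ℕ)
    (A : EuclideanSpace ℝ (Fin n) →L[ℝ] EuclideanSpace ℝ (Fin n))
    (B : ℝ → EuclideanSpace ℝ (Fin n) →L[ℝ] EuclideanSpace ℝ (Fin n))
    (hBcont : ContinuousOn B (Set.Ioi 0)) (hBbdd : ∃ M, ∀ x > (0 : ℝ), ‖B x‖ ≤ M)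
    (x₀ : ℝ) (hx₀ : 0 < x₀)
    (Y : ℝ → EuclideanSpace ℝ (Fin n) →L[ℝ] EuclideanSpace ℝ (Fin n))
    (hYd : ∀ x > (0 : ℝ), HasDerivAt Y ((x⁻¹ • A + B x) ∘L Y x) x)
    (hYx₀ : Y x₀ = 1) (hYu : ∀ x > (0 : ℝ), IsUnit (Y x))
    (P₁ P₂ P₃ P₄ P₅ P₆ : EuclideanSpace ℝ (Fin n) →L[ℝ] EuclideanSpace ℝ (Fin n))
    (hsum : P₁ + P₂ + P₃ + P₄ + P₅ + P₆ = 1)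
    (hidem : ∀ i, ![P₁, P₂, P₃, P₄, P₅, P₆] i ∘L ![P₁, P₂, P₃, P₄, P₅, P₆] i
      = ![P₁, P₂, P₃, P₄, P₅, P₆] i)
    (hdisj : ∀ i j, i ≠ j →
      ![P₁, P₂, P₃, P₄, P₅, P₆] i ∘L ![P₁, P₂, P₃, P₄, P₅, P₆] j = 0)
    -- the projectors are self-adjoint
    (hsa : ∀ i, ContinuousLinearMap.adjoint (![P₁, P₂, P₃, P₄, P₅, P₆] i)
      = ![P₁, P₂, P₃, P₄, P₅, P₆] i)
    (C₀ α : ℝ) (hC₀ : 0 < C₀) (hα : 0 < α)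
    (hQp : ∀ x s : ℝ, 0 < x → x ≤ s → s ≤ x₀ →
      ‖Y x ∘L (P₁ + P₄) ∘L Ring.inverse (Y s)‖ ≤ C₀ * (x / s) ^ (1 + α))
    (hQm : ∀ x s : ℝ, 0 < s → s ≤ x → x ≤ x₀ →
      ‖Y x ∘L (P₂ + P₃ + P₅ + P₆) ∘L Ring.inverse (Y s)‖ ≤ C₀ * (x / s) ^ (1 - α))
    (Cs γ : ℝ) (hCs : 0 < Cs) (hγ : 0 < γ)
    (hPm : ∀ x s : ℝ, x₀ ≤ s → s ≤ x →
      ‖Y x ∘L (P₁ + P₂ + P₃) ∘L Ring.inverse (Y s)‖ ≤ Cs * Real.exp (-(γ * (x - s))))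
    (hPp : ∀ x s : ℝ, x₀ ≤ x → x ≤ s →
      ‖Y x ∘L (P₄ + P₅ + P₆) ∘L Ring.inverse (Y s)‖ ≤ Cs * Real.exp (-(γ * (s - x)))) :
    ∀ η₀ : EuclideanSpace ℝ (Fin n),
      IntegrableOn
        (fun x => ContinuousLinearMap.adjoint (Ring.inverse (Y x)) η₀) (Set.Ioi 0)
      ↔ (P₅ + P₆) η₀ = η₀ :=
  adjoint_solution_integrable_iff_general n A B x₀ hx₀ Y hYd hYx₀ hYu P₁ P₂ P₃ P₄ P₅ P₆ hsum hidem
    hdisj hsa C₀ α hC₀ hα hQp hQm Cs γ hCs hγ hPm hPp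
end

section
/- Assume each projector Pⱼ (j = 1,…,6) is self-adjoint, and let g : [0,∞) → ℝⁿ be continuous and bounded. Then ∫₀^{∞} (P₅+P₆)Y(s;x₀)⁻¹ g(s) ds = 0 if and only if ∫₀^{∞} ⟨(Y(x;x₀)⁻¹)*η₀, g(x)⟩ dx = 0 for every η₀ ∈ ℝⁿ such that the function x ↦ (Y(x;x₀)⁻¹)*η₀ is Lebesgue integrable on (0,∞) (i.e., for every solution of the adjoint system η′ = −(A*/x + B(x)*)η belonging to L¹([0,∞) → ℝⁿ)). -/
/-!
Write `Z x = (Y x)⁻¹` and `Π = P₅ + P₆`. Since `Π = P₊ Q₋ = Q₋ P₊`, the dichotomy estimates bound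
`‖Π Z x‖` by a multiple of `x ^ (α - 1)` near `0` and of `exp (-γ x)` near `∞`, so `Π Z` is
integrable. Hence every `Z(·)* Π* ζ` is an integrable adjoint solution, and
`∫ ⟪Z(x)* Π* ζ, g x⟫ = ⟪ζ, ∫ Π Z g⟫`; this gives the implication from right to left.
Conversely, an adjoint solution `η = Z(·)* η₀` pairs with every solution `Y(·) v` to the constant
`⟪η₀, v⟫`. For `v ∈ ran P₋` the solution `Y(·) v` stays bounded as `x → ∞`, and for `v ∈ ran Q₊`
it is `O(x)` as `x → 0`; as neither a nonzero constant on `[x₀, ∞)` nor `1 / x` on `(0, x₀]` is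
integrable, an integrable `η` has `η₀ ⊥ ran P₋ + ran Q₊`, that is `Π* η₀ = η₀`, and the identity
above with `ζ = η₀` gives the other implication.
-/

open MeasureTheory Set
open scoped InnerProductSpace
open ContinuousLinearMap (adjoint)

namespace OrthogonalIdempotents

variable {R ι : Type*} [Ring R] [DecidableEq ι] {e : ι → R}

theorem sum_mul_of_mem (he : OrthogonalIdempotents e) {i : ι} {s : Finset ι} (h : i ∈ s) :
    (∑ j ∈ s, e j) * e i = e i := by
  simp [Finset.sum_mul, he.mul_eq, h]

theorem sum_mul_sum (he : OrthogonalIdempotents e) (s t : Finset ι) :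
    (∑ i ∈ s, e i) * ∑ j ∈ t, e j = ∑ i ∈ s ∩ t, e i := by
  simp [Finset.sum_mul, Finset.mul_sum, he.mul_eq, Finset.sum_ite_mem, Finset.inter_comm]

end OrthogonalIdempotents

theorem CompleteOrthogonalIdempotents.eq_comp_sum_compl_of_comp_sum_eq_zero
    {𝕜 E F ι : Type*} [NontriviallyNormedField 𝕜] [NormedAddCommGroup E] [NormedSpace 𝕜 E]
    [NormedAddCommGroup F] [NormedSpace 𝕜 F] [Fintype ι] [DecidableEq ι]
    {e : ι → E →L[𝕜] E} (he : CompleteOrthogonalIdempotents e) {ℓ : E →L[𝕜] F}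
    {s t : Finset ι} (hs : ℓ ∘L ∑ i ∈ s, e i = 0) (ht : ℓ ∘L ∑ i ∈ t, e i = 0) :
    ℓ = ℓ ∘L ∑ i ∈ (s ∪ t)ᶜ, e i := by
  have hvan : ∀ i ∈ s ∪ t, ℓ ∘L e i = 0 := by
    intro i hi
    rcases Finset.mem_union.1 hi with hi | hi
    · rw [← he.toOrthogonalIdempotents.sum_mul_of_mem hi, ContinuousLinearMap.mul_def,
        ← ContinuousLinearMap.comp_assoc, hs, ContinuousLinearMap.zero_comp]
    · rw [← he.toOrthogonalIdempotents.sum_mul_of_mem hi, ContinuousLinearMap.mul_def,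
        ← ContinuousLinearMap.comp_assoc, ht, ContinuousLinearMap.zero_comp]
  calc ℓ = ℓ ∘L ∑ i, e i := by
        rw [he.complete, ContinuousLinearMap.one_def, ContinuousLinearMap.comp_id]
    _ = ∑ i, ℓ ∘L e i := ContinuousLinearMap.comp_finsetSum _ _
    _ = ∑ i ∈ (s ∪ t)ᶜ, ℓ ∘L e i := by
      rw [← Finset.sum_add_sum_compl (s ∪ t), Finset.sum_eq_zero hvan, zero_add]
    _ = ℓ ∘L ∑ i ∈ (s ∪ t)ᶜ, e i := (ContinuousLinearMap.comp_finsetSum _ _).symm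

section Integrability

variable {E F : Type*} [NormedAddCommGroup E] [InnerProductSpace ℝ E] [NormedAddCommGroup F]

theorem inner_eq_zero_of_integrableOn_Ici {η w : ℝ → E} {a K c : ℝ}
    (hη : IntegrableOn η (Ici a)) (hw : ∀ x ∈ Ici a, ‖w x‖ ≤ K)
    (hc : ∀ x ∈ Ici a, ⟪η x, w x⟫_ℝ = c) : c = 0 := by
  have hint : IntegrableOn (fun _ ↦ c) (Ici a) := by
    refine Integrable.mono' (hη.norm.mul_const K) aestronglyMeasurable_const ?_
    filter_upwards [ae_restrict_mem measurableSet_Ici] with x hx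
    calc ‖c‖ = |⟪η x, w x⟫_ℝ| := by rw [hc x hx, Real.norm_eq_abs]
      _ ≤ ‖η x‖ * ‖w x‖ := abs_real_inner_le_norm _ _
      _ ≤ ‖η x‖ * K := by gcongr; exact hw x hx
  simpa [Real.volume_Ici] using hint

theorem inner_eq_zero_of_integrableOn_Ioc {η w : ℝ → E} {a K c : ℝ} (ha : 0 < a)
    (hη : IntegrableOn η (Ioc 0 a)) (hw : ∀ x ∈ Ioc 0 a, ‖w x‖ ≤ K * x)
    (hc : ∀ x ∈ Ioc 0 a, ⟪η x, w x⟫_ℝ = c) : c = 0 := by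
  have hint : IntegrableOn (fun x ↦ c * x⁻¹) (Ioc 0 a) := by
    refine Integrable.mono' (hη.norm.mul_const K)
      (measurable_inv.const_mul c).aestronglyMeasurable ?_
    filter_upwards [ae_restrict_mem measurableSet_Ioc] with x hx
    have hx0 : 0 < x := hx.1
    rw [norm_mul, norm_inv, Real.norm_of_nonneg hx0.le, ← hc x hx, Real.norm_eq_abs,
      ← div_eq_mul_inv, div_le_iff₀ hx0]
    calc |⟪η x, w x⟫_ℝ| ≤ ‖η x‖ * ‖w x‖ := abs_real_inner_le_norm _ _
      _ ≤ ‖η x‖ * (K * x) := by gcongr; exact hw x hx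
      _ = ‖η x‖ * K * x := by ring
  by_contra hc0
  have hinv : IntervalIntegrable (fun x : ℝ ↦ x⁻¹) volume 0 a := by
    rw [intervalIntegrable_iff_integrableOn_Ioc_of_le ha.le]
    have := hint.const_mul c⁻¹
    simp only [← mul_assoc, inv_mul_cancel₀ hc0, one_mul] at this
    exact this
  simp [ha.ne] at hinv

theorem integrableOn_Ioi_of_norm_le_rpow_of_norm_le_exp
    {f : ℝ → F} {a α γ C₁ C₂ : ℝ} (ha : 0 < a) (hα : 0 < α) (hγ : 0 < γ)
    (hf : ContinuousOn f (Ioi 0))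
    (hsmall : ∀ x ∈ Ioc 0 a, ‖f x‖ ≤ C₁ * (a / x) ^ (1 - α))
    (hlarge : ∀ x ∈ Ioi a, ‖f x‖ ≤ C₂ * Real.exp (-(γ * (x - a)))) :
    IntegrableOn f (Ioi 0) := by
  rw [← Ioc_union_Ioi_eq_Ioi ha.le]
  refine IntegrableOn.union ?_ ?_
  · have hrpow : IntegrableOn (fun x : ℝ ↦ x ^ (α - 1)) (Ioc 0 a) := by
      rw [← intervalIntegrable_iff_integrableOn_Ioc_of_le ha.le]
      exact intervalIntegral.intervalIntegrable_rpow' (by linarith)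
    refine Integrable.mono' (hrpow.const_mul (C₁ * a ^ (1 - α)))
      ((hf.mono Ioc_subset_Ioi_self).aestronglyMeasurable measurableSet_Ioc) ?_
    filter_upwards [ae_restrict_mem measurableSet_Ioc] with x hx
    calc ‖f x‖ ≤ C₁ * (a / x) ^ (1 - α) := hsmall x hx
      _ = C₁ * a ^ (1 - α) * x ^ (α - 1) := by
        rw [Real.div_rpow ha.le hx.1.le, div_eq_mul_inv, ← Real.rpow_neg hx.1.le, neg_sub]
        ring
  · refine Integrable.mono' ((exp_neg_integrableOn_Ioi a hγ).const_mul (C₂ * Real.exp (γ * a)))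
      ((hf.mono (Ioi_subset_Ioi ha.le)).aestronglyMeasurable measurableSet_Ioi) ?_
    filter_upwards [ae_restrict_mem measurableSet_Ioi] with x hx
    rw [mul_assoc, ← Real.exp_add]
    convert hlarge x hx using 3
    ring

end Integrability

theorem MeasureTheory.Integrable.apply_of_norm_le {α 𝕜 E F : Type*} [MeasurableSpace α]
    {μ : Measure α} [NontriviallyNormedField 𝕜] [NormedAddCommGroup E] [NormedSpace 𝕜 E]
    [NormedAddCommGroup F] [NormedSpace 𝕜 F] {φ : α → E →L[𝕜] F} {g : α → E} {M : ℝ}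
    (hφ : Integrable φ μ) (hg : AEStronglyMeasurable g μ) (hgM : ∀ᵐ x ∂μ, ‖g x‖ ≤ M) :
    Integrable (fun x ↦ φ x (g x)) μ :=
  (ContinuousLinearMap.apply 𝕜 F).integrable_of_bilin_of_bdd_left M hg hgM hφ

theorem ContinuousOn.ring_inverse {X R : Type*} [TopologicalSpace X] [NormedRing R]
    [HasSummableGeomSeries R] {f : X → R} {s : Set X} (hf : ContinuousOn f s)
    (hu : ∀ x ∈ s, IsUnit (f x)) : ContinuousOn (fun x ↦ Ring.inverse (f x)) s := by
  intro x hx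
  obtain ⟨u, hu⟩ := hu x hx
  exact (hu ▸ NormedRing.inverse_continuousAt u).comp_continuousWithinAt (hf x hx)

section Evolution

variable {E : Type*} [NormedAddCommGroup E]

section Normed

variable [NormedSpace ℝ E] {Y : ℝ → E →L[ℝ] E} {P : E →L[ℝ] E} {a : ℝ}

theorem norm_comp_ring_inverse_le (hY : Y a = 1) {S T : E →L[ℝ] E} {x C : ℝ}
    (h : ‖Y a ∘L T ∘L Ring.inverse (Y x)‖ ≤ C) :
    ‖(S * T) ∘L Ring.inverse (Y x)‖ ≤ ‖S‖ * C := by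
  rw [hY, ContinuousLinearMap.one_def, ContinuousLinearMap.id_comp] at h
  rw [ContinuousLinearMap.mul_def, ContinuousLinearMap.comp_assoc]
  exact (ContinuousLinearMap.opNorm_comp_le _ _).trans (by gcongr)

theorem integrableOn_comp_ring_inverse [CompleteSpace E] {S₁ T₁ S₂ T₂ : E →L[ℝ] E}
    {α γ C₁ C₂ : ℝ} (ha : 0 < a) (hα : 0 < α) (hγ : 0 < γ) (hYc : ContinuousOn Y (Ioi 0))
    (hYu : ∀ x ∈ Ioi 0, IsUnit (Y x)) (hYa : Y a = 1) (h₁ : P = S₁ * T₁) (h₂ : P = S₂ * T₂)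
    (hT₁ : ∀ x ∈ Ioc 0 a, ‖Y a ∘L T₁ ∘L Ring.inverse (Y x)‖ ≤ C₁ * (a / x) ^ (1 - α))
    (hT₂ : ∀ x ∈ Ioi a, ‖Y a ∘L T₂ ∘L Ring.inverse (Y x)‖ ≤ C₂ * Real.exp (-(γ * (x - a)))) :
    IntegrableOn (fun x ↦ P ∘L Ring.inverse (Y x)) (Ioi 0) := by
  refine integrableOn_Ioi_of_norm_le_rpow_of_norm_le_exp ha hα hγ
    (continuousOn_const.clm_comp (hYc.ring_inverse hYu)) (C₁ := ‖S₁‖ * C₁) (C₂ := ‖S₂‖ * C₂)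
    (fun x hx ↦ ?_) fun x hx ↦ ?_
  · rw [h₁, mul_assoc]
    exact norm_comp_ring_inverse_le hYa (hT₁ x hx)
  · rw [h₂, mul_assoc]
    exact norm_comp_ring_inverse_le hYa (hT₂ x hx)

theorem norm_comp_le_of_le_exp (hY : Y a = 1) {C γ : ℝ} (hC : 0 ≤ C) (hγ : 0 ≤ γ)
    (h : ∀ x ∈ Ici a, ‖Y x ∘L P ∘L Ring.inverse (Y a)‖ ≤ C * Real.exp (-(γ * (x - a)))) :
    ∀ x ∈ Ici a, ‖Y x ∘L P‖ ≤ C := by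
  intro x hx
  have hexp : Real.exp (-(γ * (x - a))) ≤ 1 :=
    Real.exp_le_one_iff.2 (neg_nonpos.2 (mul_nonneg hγ (sub_nonneg.2 hx)))
  have hx' := h x hx
  rw [hY, Ring.inverse_one, ContinuousLinearMap.one_def, ContinuousLinearMap.comp_id] at hx'
  exact hx'.trans (mul_le_of_le_one_right hC hexp)

theorem norm_comp_le_of_le_rpow (hY : Y a = 1) (ha : 0 < a) {C α : ℝ} (hC : 0 ≤ C)
    (hα : 0 ≤ α) (h : ∀ x ∈ Ioc 0 a, ‖Y x ∘L P ∘L Ring.inverse (Y a)‖ ≤ C * (x / a) ^ (1 + α)) :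
    ∀ x ∈ Ioc 0 a, ‖Y x ∘L P‖ ≤ C / a * x := by
  intro x hx
  have hpow : (x / a) ^ (1 + α) ≤ x / a := Real.rpow_le_self_of_le_one
    (div_nonneg hx.1.le ha.le) ((div_le_one ha).2 hx.2) (by linarith)
  have hx' := h x hx
  rw [hY, Ring.inverse_one, ContinuousLinearMap.one_def, ContinuousLinearMap.comp_id] at hx'
  calc ‖Y x ∘L P‖ ≤ C * (x / a) ^ (1 + α) := hx'
    _ ≤ C * (x / a) := by gcongr
    _ = C / a * x := by ring

end Normed

variable [InnerProductSpace ℝ E] [CompleteSpace E]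

theorem MeasureTheory.Integrable.adjoint_apply {α : Type*} [MeasurableSpace α] {μ : Measure α}
    {φ : α → E →L[ℝ] E} (hφ : Integrable φ μ) (ζ : E) :
    Integrable (fun x ↦ adjoint (φ x) ζ) μ :=
  ((LinearIsometryEquiv.integrable_comp_iff (adjoint (𝕜 := ℝ) (E := E) (F := E))).2 hφ
    |>.apply_continuousLinearMap ζ)

theorem adjoint_apply_eq_self_of_innerSL_eq_comp {P : E →L[ℝ] E} {η : E}
    (h : innerSL ℝ η = innerSL ℝ η ∘L P) : adjoint P η = η :=
  ext_inner_right ℝ fun v ↦ by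
    simpa [ContinuousLinearMap.adjoint_inner_left] using congr($h v).symm

theorem integral_inner_adjoint_apply {α : Type*} [MeasurableSpace α] {μ : Measure α}
    {Z : α → E →L[ℝ] E} {g : α → E} (P : E →L[ℝ] E)
    (hF : Integrable (fun x ↦ (P ∘L Z x) (g x)) μ) (ζ : E) :
    ∫ x, ⟪adjoint (Z x) (adjoint P ζ), g x⟫_ℝ ∂μ = ⟪ζ, ∫ x, (P ∘L Z x) (g x) ∂μ⟫_ℝ := by
  simp_rw [ContinuousLinearMap.adjoint_inner_left]
  exact integral_inner hF ζ

theorem inner_adjoint_ring_inverse_apply {T : E →L[ℝ] E} (hT : IsUnit T) (η u : E) :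
    ⟪adjoint (Ring.inverse T) η, T u⟫_ℝ = ⟪η, u⟫_ℝ := by
  rw [ContinuousLinearMap.adjoint_inner_left]
  congr 1
  exact congr($(Ring.inverse_mul_cancel _ hT) u)

variable {Y : ℝ → E →L[ℝ] E} {P : E →L[ℝ] E} {η₀ : E} {a K : ℝ}

theorem innerSL_comp_eq_zero_of_integrableOn_Ici (hY : ∀ x ∈ Ici a, IsUnit (Y x))
    (hη : IntegrableOn (fun x ↦ adjoint (Ring.inverse (Y x)) η₀) (Ici a))
    (hP : ∀ x ∈ Ici a, ‖Y x ∘L P‖ ≤ K) : innerSL ℝ η₀ ∘L P = 0 := by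
  ext v
  exact inner_eq_zero_of_integrableOn_Ici hη (w := fun x ↦ Y x (P v))
    (fun x hx ↦ ContinuousLinearMap.le_of_opNorm_le _ (hP x hx) v)
    fun x hx ↦ inner_adjoint_ring_inverse_apply (hY x hx) _ _

theorem innerSL_comp_eq_zero_of_integrableOn_Ioc (ha : 0 < a) (hY : ∀ x ∈ Ioc 0 a, IsUnit (Y x))
    (hη : IntegrableOn (fun x ↦ adjoint (Ring.inverse (Y x)) η₀) (Ioc 0 a))
    (hP : ∀ x ∈ Ioc 0 a, ‖Y x ∘L P‖ ≤ K * x) : innerSL ℝ η₀ ∘L P = 0 := by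
  ext v
  refine inner_eq_zero_of_integrableOn_Ioc ha hη (w := fun x ↦ Y x (P v)) (K := K * ‖v‖)
    (fun x hx ↦ ?_) fun x hx ↦ inner_adjoint_ring_inverse_apply (hY x hx) _ _
  calc ‖Y x (P v)‖ ≤ K * x * ‖v‖ := ContinuousLinearMap.le_of_opNorm_le _ (hP x hx) v
    _ = K * ‖v‖ * x := by ring

end Evolution

theorem orthogonality_condition_iff_general (n : ℕ)
    (A : EuclideanSpace ℝ (Fin n) →L[ℝ] EuclideanSpace ℝ (Fin n))
    (B : ℝ → EuclideanSpace ℝ (Fin n) →L[ℝ] EuclideanSpace ℝ (Fin n))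
    (x₀ : ℝ) (hx₀ : 0 < x₀)
    (Y : ℝ → EuclideanSpace ℝ (Fin n) →L[ℝ] EuclideanSpace ℝ (Fin n))
    (hYd : ∀ x > (0 : ℝ), HasDerivAt Y ((x⁻¹ • A + B x) ∘L Y x) x)
    (hYx₀ : Y x₀ = 1) (hYu : ∀ x > (0 : ℝ), IsUnit (Y x))
    (P₁ P₂ P₃ P₄ P₅ P₆ : EuclideanSpace ℝ (Fin n) →L[ℝ] EuclideanSpace ℝ (Fin n))
    (hsum : P₁ + P₂ + P₃ + P₄ + P₅ + P₆ = 1)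
    (hidem : ∀ i, ![P₁, P₂, P₃, P₄, P₅, P₆] i ∘L ![P₁, P₂, P₃, P₄, P₅, P₆] i
      = ![P₁, P₂, P₃, P₄, P₅, P₆] i)
    (hdisj : ∀ i j, i ≠ j →
      ![P₁, P₂, P₃, P₄, P₅, P₆] i ∘L ![P₁, P₂, P₃, P₄, P₅, P₆] j = 0)
    (C₀ α : ℝ) (hC₀ : 0 < C₀) (hα : 0 < α)
    (hQp : ∀ x s : ℝ, 0 < x → x ≤ s → s ≤ x₀ →
      ‖Y x ∘L (P₁ + P₄) ∘L Ring.inverse (Y s)‖ ≤ C₀ * (x / s) ^ (1 + α))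
    (hQm : ∀ x s : ℝ, 0 < s → s ≤ x → x ≤ x₀ →
      ‖Y x ∘L (P₂ + P₃ + P₅ + P₆) ∘L Ring.inverse (Y s)‖ ≤ C₀ * (x / s) ^ (1 - α))
    (Cs γ : ℝ) (hCs : 0 < Cs) (hγ : 0 < γ)
    (hPm : ∀ x s : ℝ, x₀ ≤ s → s ≤ x →
      ‖Y x ∘L (P₁ + P₂ + P₃) ∘L Ring.inverse (Y s)‖ ≤ Cs * Real.exp (-(γ * (x - s))))
    (hPp : ∀ x s : ℝ, x₀ ≤ x → x ≤ s →
      ‖Y x ∘L (P₄ + P₅ + P₆) ∘L Ring.inverse (Y s)‖ ≤ Cs * Real.exp (-(γ * (s - x))))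
    -- g continuous and bounded
    (g : ℝ → EuclideanSpace ℝ (Fin n))
    (hgcont : ContinuousOn g (Set.Ici 0)) (hgbdd : ∃ M, ∀ x ≥ (0 : ℝ), ‖g x‖ ≤ M) :
    (∫ s in Set.Ioi (0 : ℝ), ((P₅ + P₆) ∘L Ring.inverse (Y s)) (g s) = 0)
      ↔ ∀ η₀ : EuclideanSpace ℝ (Fin n),
          IntegrableOn
            (fun x => ContinuousLinearMap.adjoint (Ring.inverse (Y x)) η₀) (Set.Ioi 0) →
          ∫ x in Set.Ioi (0 : ℝ),
            (inner ℝ (ContinuousLinearMap.adjoint (Ring.inverse (Y x)) η₀) (g x) : ℝ) = 0 := by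
  have he : CompleteOrthogonalIdempotents ![P₁, P₂, P₃, P₄, P₅, P₆] :=
    ⟨⟨hidem, hdisj⟩, by simpa [Fin.sum_univ_six] using hsum⟩
  have hsplit₀ : P₅ + P₆ = (P₄ + P₅ + P₆) * (P₂ + P₃ + P₅ + P₆) := by
    simpa [add_assoc, show ({3, 4, 5} ∩ {1, 2, 4, 5} : Finset (Fin 6)) = {4, 5} by decide]
      using (he.1.sum_mul_sum {3, 4, 5} {1, 2, 4, 5}).symm
  have hsplit₁ : P₅ + P₆ = (P₂ + P₃ + P₅ + P₆) * (P₄ + P₅ + P₆) := by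
    simpa [add_assoc, show ({1, 2, 4, 5} ∩ {3, 4, 5} : Finset (Fin 6)) = {4, 5} by decide]
      using (he.1.sum_mul_sum {1, 2, 4, 5} {3, 4, 5}).symm
  have hPZ : IntegrableOn (fun x ↦ (P₅ + P₆) ∘L Ring.inverse (Y x)) (Ioi 0) :=
    integrableOn_comp_ring_inverse hx₀ hα hγ
      (fun x hx ↦ (hYd x hx).continuousAt.continuousWithinAt) hYu hYx₀ hsplit₀ hsplit₁
      (fun x hx ↦ hQm x₀ x hx.1 hx.2 le_rfl) fun x hx ↦ hPp x₀ x le_rfl hx.le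
  obtain ⟨M, hM⟩ := hgbdd
  have hF : IntegrableOn (fun s ↦ ((P₅ + P₆) ∘L Ring.inverse (Y s)) (g s)) (Ioi 0) :=
    hPZ.apply_of_norm_le
      ((hgcont.mono Ioi_subset_Ici_self).aestronglyMeasurable measurableSet_Ioi)
      (ae_restrict_of_forall_mem measurableSet_Ioi fun x hx ↦ hM x hx.le)
  constructor
  · intro hF0 η₀ hη
    have hPminus : innerSL ℝ η₀ ∘L (P₁ + P₂ + P₃) = 0 :=
      innerSL_comp_eq_zero_of_integrableOn_Ici (fun x hx ↦ hYu x (hx₀.trans_le hx))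
        (hη.mono_set fun x hx ↦ hx₀.trans_le hx)
        (norm_comp_le_of_le_exp hYx₀ hCs.le hγ.le fun x hx ↦ hPm x x₀ le_rfl hx)
    have hQplus : innerSL ℝ η₀ ∘L (P₁ + P₄) = 0 :=
      innerSL_comp_eq_zero_of_integrableOn_Ioc hx₀ (fun x hx ↦ hYu x hx.1)
        (hη.mono_set Ioc_subset_Ioi_self)
        (norm_comp_le_of_le_rpow hYx₀ hx₀ hC₀.le hα.le fun x hx ↦ hQp x x₀ hx.1 hx.2 le_rfl)
    have hfix : adjoint (P₅ + P₆) η₀ = η₀ := by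
      have h := he.eq_comp_sum_compl_of_comp_sum_eq_zero (ℓ := innerSL ℝ η₀)
        (s := {0, 1, 2}) (t := {0, 3})
        (by simpa [add_assoc] using hPminus) (by simpa using hQplus)
      rw [show (({0, 1, 2} ∪ {0, 3} : Finset (Fin 6))ᶜ) = {4, 5} by decide,
        Finset.sum_pair (by decide)] at h
      exact adjoint_apply_eq_self_of_innerSL_eq_comp h
    rw [← hfix, integral_inner_adjoint_apply _ hF, hF0, inner_zero_right]
  · intro h
    refine ext_inner_left ℝ fun ζ ↦ ?_
    rw [inner_zero_right, ← integral_inner_adjoint_apply _ hF]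
    exact h _ (by
      simpa only [IntegrableOn, ContinuousLinearMap.adjoint_comp, ContinuousLinearMap.comp_apply]
        using hPZ.adjoint_apply ζ)

/-- the orthogonality condition `∫₀^∞ (P₅+P₆) Y(s;x₀)⁻¹ g(s) ds = 0`
holds iff `g` is orthogonal, in the sense of `∫₀^∞ ⟨·,·⟩ dx`, to every solution
`x ↦ (Y(x;x₀)⁻¹)* η₀` of the adjoint system belonging to `L¹([0,∞) → ℝⁿ)`. -/
theorem orthogonality_condition_iff (n : ℕ)
    (A : EuclideanSpace ℝ (Fin n) →L[ℝ] EuclideanSpace ℝ (Fin n))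
    (B : ℝ → EuclideanSpace ℝ (Fin n) →L[ℝ] EuclideanSpace ℝ (Fin n))
    (hBcont : ContinuousOn B (Set.Ioi 0)) (hBbdd : ∃ M, ∀ x > (0 : ℝ), ‖B x‖ ≤ M)
    (x₀ : ℝ) (hx₀ : 0 < x₀)
    (Y : ℝ → EuclideanSpace ℝ (Fin n) →L[ℝ] EuclideanSpace ℝ (Fin n))
    (hYd : ∀ x > (0 : ℝ), HasDerivAt Y ((x⁻¹ • A + B x) ∘L Y x) x)
    (hYx₀ : Y x₀ = 1) (hYu : ∀ x > (0 : ℝ), IsUnit (Y x))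
    (P₁ P₂ P₃ P₄ P₅ P₆ : EuclideanSpace ℝ (Fin n) →L[ℝ] EuclideanSpace ℝ (Fin n))
    (hsum : P₁ + P₂ + P₃ + P₄ + P₅ + P₆ = 1)
    (hidem : ∀ i, ![P₁, P₂, P₃, P₄, P₅, P₆] i ∘L ![P₁, P₂, P₃, P₄, P₅, P₆] i
      = ![P₁, P₂, P₃, P₄, P₅, P₆] i)
    (hdisj : ∀ i j, i ≠ j →
      ![P₁, P₂, P₃, P₄, P₅, P₆] i ∘L ![P₁, P₂, P₃, P₄, P₅, P₆] j = 0)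
    -- the projectors are self-adjoint
    (hsa : ∀ i, ContinuousLinearMap.adjoint (![P₁, P₂, P₃, P₄, P₅, P₆] i)
      = ![P₁, P₂, P₃, P₄, P₅, P₆] i)
    (C₀ α : ℝ) (hC₀ : 0 < C₀) (hα : 0 < α)
    (hQp : ∀ x s : ℝ, 0 < x → x ≤ s → s ≤ x₀ →
      ‖Y x ∘L (P₁ + P₄) ∘L Ring.inverse (Y s)‖ ≤ C₀ * (x / s) ^ (1 + α))
    (hQm : ∀ x s : ℝ, 0 < s → s ≤ x → x ≤ x₀ →
      ‖Y x ∘L (P₂ + P₃ + P₅ + P₆) ∘L Ring.inverse (Y s)‖ ≤ C₀ * (x / s) ^ (1 - α))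
    (Cs γ : ℝ) (hCs : 0 < Cs) (hγ : 0 < γ)
    (hPm : ∀ x s : ℝ, x₀ ≤ s → s ≤ x →
      ‖Y x ∘L (P₁ + P₂ + P₃) ∘L Ring.inverse (Y s)‖ ≤ Cs * Real.exp (-(γ * (x - s))))
    (hPp : ∀ x s : ℝ, x₀ ≤ x → x ≤ s →
      ‖Y x ∘L (P₄ + P₅ + P₆) ∘L Ring.inverse (Y s)‖ ≤ Cs * Real.exp (-(γ * (s - x))))
    -- g continuous and bounded
    (g : ℝ → EuclideanSpace ℝ (Fin n))
    (hgcont : ContinuousOn g (Set.Ici 0)) (hgbdd : ∃ M, ∀ x ≥ (0 : ℝ), ‖g x‖ ≤ M) :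
    (∫ s in Set.Ioi (0 : ℝ), ((P₅ + P₆) ∘L Ring.inverse (Y s)) (g s) = 0)
      ↔ ∀ η₀ : EuclideanSpace ℝ (Fin n),
          IntegrableOn
            (fun x => ContinuousLinearMap.adjoint (Ring.inverse (Y x)) η₀) (Set.Ioi 0) →
          ∫ x in Set.Ioi (0 : ℝ),
            (inner ℝ (ContinuousLinearMap.adjoint (Ring.inverse (Y x)) η₀) (g x) : ℝ) = 0 :=
  orthogonality_condition_iff_general n A B x₀ hx₀ Y hYd hYx₀ hYu P₁ P₂ P₃ P₄ P₅ P₆ hsum hidem hdisj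
    C₀ α hC₀ hα hQp hQm Cs γ hCs hγ hPm hPp g hgcont hgbdd
end

section
/- Assume additionally that C₇ := sup_{x ∈ (0,x₀]} ‖Y(x;x₀)P₅‖ < ∞. Then there exists a constant K₁ > 0, depending only on α, γ, x₀, C₀, C*, C₇ and the norms of the projectors, such that for every continuous bounded ḡ : [0,∞) → ℝⁿ satisfying ∫₀^{∞} P₆ Y(s;x₀)⁻¹ ḡ(s) ds = 0 (this integral converging absolutely) and for every x > 0: ‖∫₀^{∞} G(x,s) ḡ(s) ds‖ ≤ K₁ · sup_{s ≥ 0} ‖ḡ(s)‖. -/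
/-!
For `x > x₀` the kernel is estimated directly: on `(0, x₀)` the factorisation
`Y(x)(P₂+P₃)Y(s)⁻¹ = [Y(x)P₋]·[Q₋Y(s)⁻¹]` splits it into a factor bounded by the exponential
dichotomy at `x₀` and one bounded by the power dichotomy at `x₀`, while on `(x₀, ∞)` the
exponential dichotomy gives an integrable exponential profile.

For `x ≤ x₀` the orthogonality condition lets one add `Y(x)P₆Y(s)⁻¹` to the kernel without
changing the integral. The modified kernel is `Y(x)Q₋Y(s)⁻¹ - Y(x)P₅Y(s)⁻¹` for `s < x`,
`-Y(x)Q₊Y(s)⁻¹ - Y(x)P₅Y(s)⁻¹` for `x < s < x₀` and `-Y(x)(P₄+P₅)Y(s)⁻¹` for `s > x₀`; the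
`P₅`-terms are controlled by `C₇`, the others by the two dichotomies, and each majorant has an
`s`-integral bounded independently of `x`.

All estimates are made on the lower Lebesgue integral of the norm, so no measurability of the
integrand is needed.
-/

open MeasureTheory Set Filter
open scoped Topology

/-- The Green function `G(x,s)` of the boundary value problem, built from the evolution
operator `Y(·;x₀)` and the six projectors `P₁, …, P₆`. -/
noncomputable def greenG {n : ℕ}
    (Y : ℝ → EuclideanSpace ℝ (Fin n) →L[ℝ] EuclideanSpace ℝ (Fin n)) (x₀ : ℝ)
    (P₁ P₂ P₃ P₄ P₅ P₆ : EuclideanSpace ℝ (Fin n) →L[ℝ] EuclideanSpace ℝ (Fin n))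
    (x s : ℝ) : EuclideanSpace ℝ (Fin n) →L[ℝ] EuclideanSpace ℝ (Fin n) :=
  if x₀ ≤ s ∧ s ≤ x then Y x ∘L (P₁ + P₂ + P₃) ∘L Ring.inverse (Y s)
  else if s ≤ x ∧ s < x₀ then Y x ∘L (P₂ + P₃) ∘L Ring.inverse (Y s)
  else if x < s ∧ s < x₀ then -(Y x ∘L (P₁ + P₄ + P₅ + P₆) ∘L Ring.inverse (Y s))
  else -(Y x ∘L (P₄ + P₅ + P₆) ∘L Ring.inverse (Y s))

open Real

section Profiles

variable {α γ : ℝ}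

lemma div_rpow_eq_mul_rpow_neg {b s : ℝ} (hb : 0 ≤ b) (hs : 0 ≤ s) (e : ℝ) :
    (b / s) ^ e = b ^ e * s ^ (-e) := by
  rw [div_rpow hb hs, rpow_neg hs, div_eq_mul_inv]

lemma integrableOn_Ioo_div_rpow_one_sub (hα : 0 < α) {b : ℝ} (hb : 0 < b) :
    IntegrableOn (fun s : ℝ => (b / s) ^ (1 - α)) (Ioo 0 b) := by
  have h : IntegrableOn (fun s : ℝ => b ^ (1 - α) * s ^ (α - 1)) (Ioc 0 b) :=
    ((intervalIntegrable_iff_integrableOn_Ioc_of_le hb.le).1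
      (intervalIntegral.intervalIntegrable_rpow' (by linarith))).const_mul _
  refine (h.mono_set Ioo_subset_Ioc_self).congr_fun (fun s hs => ?_) measurableSet_Ioo
  rw [div_rpow_eq_mul_rpow_neg hb.le hs.1.le, neg_sub]

lemma setIntegral_div_rpow_one_sub_le (hα : 0 < α) {b : ℝ} (hb : 0 < b) {S : Set ℝ}
    (hS : S ⊆ Ioo 0 b) : ∫ s in S, (b / s) ^ (1 - α) ≤ b / α := by
  refine (setIntegral_mono_set (integrableOn_Ioo_div_rpow_one_sub hα hb)
    (ae_restrict_of_forall_mem measurableSet_Ioo fun s hs =>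
      rpow_nonneg (div_nonneg hb.le hs.1.le) _)
    hS.eventuallyLE).trans_eq ?_
  rw [setIntegral_congr_fun measurableSet_Ioo (fun s hs => by
      rw [div_rpow_eq_mul_rpow_neg hb.le hs.1.le, neg_sub]), integral_const_mul,
    ← integral_Ioc_eq_integral_Ioo, ← intervalIntegral.integral_of_le hb.le,
    integral_rpow (Or.inl (by linarith)), sub_add_cancel, zero_rpow hα.ne', sub_zero,
    mul_div_assoc', ← rpow_add hb, sub_add_cancel, rpow_one]

lemma integrableOn_Ioi_div_rpow_one_add (hα : 0 < α) {x : ℝ} (hx : 0 < x) :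
    IntegrableOn (fun s : ℝ => (x / s) ^ (1 + α)) (Ioi x) := by
  refine IntegrableOn.congr_fun
    ((integrableOn_Ioi_rpow_of_lt (by linarith : -(1 + α) < -1) hx).const_mul (x ^ (1 + α)))
    (fun s hs => ?_) measurableSet_Ioi
  rw [div_rpow_eq_mul_rpow_neg hx.le (hx.trans hs).le]

lemma setIntegral_div_rpow_one_add_le (hα : 0 < α) {x : ℝ} (hx : 0 < x) {S : Set ℝ}
    (hS : S ⊆ Ioi x) : ∫ s in S, (x / s) ^ (1 + α) ≤ x / α := by
  refine (setIntegral_mono_set (integrableOn_Ioi_div_rpow_one_add hα hx)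
    (ae_restrict_of_forall_mem measurableSet_Ioi fun s hs =>
      rpow_nonneg (div_nonneg hx.le (hx.trans hs).le) _)
    hS.eventuallyLE).trans_eq ?_
  rw [setIntegral_congr_fun measurableSet_Ioi (fun s hs => by
      rw [div_rpow_eq_mul_rpow_neg hx.le (hx.trans hs).le]), integral_const_mul,
    integral_Ioi_rpow_of_lt (by linarith) hx, show -(1 + α) + 1 = -α by ring, div_neg, neg_div,
    neg_neg, mul_div_assoc', ← rpow_add hx, show 1 + α + -α = 1 by ring, rpow_one]

lemma integrableOn_Ioi_exp_neg_mul_sub_right (hγ : 0 < γ) (a : ℝ) :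
    IntegrableOn (fun s : ℝ => exp (-(γ * (s - a)))) (Ioi a) := by
  refine IntegrableOn.congr_fun
    ((integrableOn_exp_mul_Ioi (neg_lt_zero.2 hγ) a).const_mul (exp (γ * a)))
    (fun s _ => ?_) measurableSet_Ioi
  rw [← exp_add]; ring_nf

lemma setIntegral_exp_neg_mul_sub_right_le (hγ : 0 < γ) {a : ℝ} {S : Set ℝ} (hS : S ⊆ Ioi a) :
    ∫ s in S, exp (-(γ * (s - a))) ≤ 1 / γ := by
  refine (setIntegral_mono_set (integrableOn_Ioi_exp_neg_mul_sub_right hγ a)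
    (ae_of_all _ fun s => by positivity) hS.eventuallyLE).trans_eq ?_
  rw [setIntegral_congr_fun measurableSet_Ioi (fun s _ => by
      rw [show -(γ * (s - a)) = γ * a + -γ * s by ring, exp_add]), integral_const_mul,
    integral_exp_mul_Ioi (neg_lt_zero.2 hγ), neg_div_neg_eq, mul_div_assoc', ← exp_add]
  simp

lemma integrableOn_Iic_exp_neg_mul_sub_left (hγ : 0 < γ) (b : ℝ) :
    IntegrableOn (fun s : ℝ => exp (-(γ * (b - s)))) (Iic b) := by
  refine IntegrableOn.congr_fun ((integrableOn_exp_mul_Iic hγ b).const_mul (exp (-(γ * b))))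
    (fun s _ => ?_) measurableSet_Iic
  rw [← exp_add]; ring_nf

lemma setIntegral_exp_neg_mul_sub_left_le (hγ : 0 < γ) {b : ℝ} {S : Set ℝ} (hS : S ⊆ Iic b) :
    ∫ s in S, exp (-(γ * (b - s))) ≤ 1 / γ := by
  refine (setIntegral_mono_set (integrableOn_Iic_exp_neg_mul_sub_left hγ b)
    (ae_of_all _ fun s => by positivity) hS.eventuallyLE).trans_eq ?_
  rw [setIntegral_congr_fun measurableSet_Iic (fun s _ => by
      rw [show -(γ * (b - s)) = -(γ * b) + γ * s by ring, exp_add]), integral_const_mul,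
    integral_exp_mul_Iic hγ, mul_div_assoc', ← exp_add]
  simp

end Profiles

lemma OrthogonalIdempotents.sum_mul_sum_s14 {R I : Type*} [Semiring R] [DecidableEq I] {e : I → R}
    (he : OrthogonalIdempotents e) (s t : Finset I) :
    (∑ i ∈ s, e i) * ∑ j ∈ t, e j = ∑ i ∈ s ∩ t, e i := by
  rw [Finset.sum_mul, ← Finset.sum_ite_mem]
  refine Finset.sum_congr rfl fun i _ => ?_
  split_ifs with h
  exacts [he.mul_sum_of_mem h, he.mul_sum_of_notMem h]

section LIntegral

variable {X : Type*} [MeasurableSpace X] {μ : Measure X}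

lemma norm_integral_le_of_lintegral_enorm_le {E : Type*} [NormedAddCommGroup E] [NormedSpace ℝ E]
    {f : X → E} {r : ℝ} (hr : 0 ≤ r) (h : ∫⁻ x, ‖f x‖ₑ ∂μ ≤ ENNReal.ofReal r) :
    ‖∫ x, f x ∂μ‖ ≤ r := by
  rw [← ENNReal.ofReal_le_ofReal_iff hr, ofReal_norm]
  exact (enorm_integral_le_lintegral_enorm _).trans h

lemma integral_add_eq_of_integral_eq_zero {E : Type*} [NormedAddCommGroup E] [NormedSpace ℝ E]
    {f φ : X → E} (hφ : Integrable φ μ) (hφ₀ : ∫ x, φ x ∂μ = 0) :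
    ∫ x, f x + φ x ∂μ = ∫ x, f x ∂μ := by
  by_cases hf : Integrable f μ
  · rw [integral_add hf hφ, hφ₀, add_zero]
  · rw [integral_undef hf, integral_undef ((integrable_add_iff_integrable_left' hφ).not.2 hf)]

variable {𝕜 E F : Type*} [NontriviallyNormedField 𝕜] [NormedAddCommGroup E] [NormedSpace 𝕜 E]
  [NormedAddCommGroup F] [NormedSpace 𝕜 F] {S : Set X} {T : X → E →L[𝕜] F} {g : X → E}
  {k k₁ k₂ : X → ℝ} {m K K₁ K₂ : ℝ}

lemma setLIntegral_enorm_apply_le (hS : MeasurableSet S) (hm : 0 ≤ m)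
    (hT : ∀ s ∈ S, ‖T s‖ ≤ k s) (hg : ∀ s ∈ S, ‖g s‖ ≤ m) (hk : IntegrableOn k S μ)
    (hK : ∫ s in S, k s ∂μ ≤ K) :
    ∫⁻ s in S, ‖T s (g s)‖ₑ ∂μ ≤ ENNReal.ofReal (K * m) := by
  have hkm : ∀ s ∈ S, ‖T s (g s)‖ ≤ k s * m := fun s hs =>
    (T s).le_of_opNorm_le_of_le (hT s hs) (hg s hs)
  calc ∫⁻ s in S, ‖T s (g s)‖ₑ ∂μ ≤ ∫⁻ s in S, ENNReal.ofReal (k s * m) ∂μ :=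
        setLIntegral_mono' hS fun s hs => by
          rw [← ofReal_norm]; exact ENNReal.ofReal_le_ofReal (hkm s hs)
    _ = ENNReal.ofReal (∫ s in S, k s * m ∂μ) :=
        (ofReal_integral_eq_lintegral_ofReal (hk.mul_const m)
          ((ae_restrict_iff' hS).2 (ae_of_all _ fun s hs => (norm_nonneg _).trans (hkm s hs)))).symm
    _ ≤ ENNReal.ofReal (K * m) := by
        rw [integral_mul_const]; exact ENNReal.ofReal_le_ofReal (by gcongr)

lemma setLIntegral_enorm_apply_le_add (hS : MeasurableSet S) (hm : 0 ≤ m)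
    (hT : ∀ s ∈ S, ‖T s‖ ≤ k₁ s + k₂ s) (hg : ∀ s ∈ S, ‖g s‖ ≤ m)
    (hk₁ : IntegrableOn k₁ S μ) (hk₂ : IntegrableOn k₂ S μ)
    (hK₁ : ∫ s in S, k₁ s ∂μ ≤ K₁) (hK₂ : ∫ s in S, k₂ s ∂μ ≤ K₂) :
    ∫⁻ s in S, ‖T s (g s)‖ₑ ∂μ ≤ ENNReal.ofReal ((K₁ + K₂) * m) :=
  setLIntegral_enorm_apply_le hS hm hT hg (hk₁.add hk₂)
    (by rw [integral_add hk₁ hk₂]; exact add_le_add hK₁ hK₂)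

end LIntegral

lemma setLIntegral_Ioi_le_add_add {f : ℝ → ENNReal} {a b c : ℝ} (hab : a ≤ b) (hbc : b ≤ c) :
    ∫⁻ s in Ioi a, f s ≤
      (∫⁻ s in Ioo a b, f s) + (∫⁻ s in Ioo b c, f s) + ∫⁻ s in Ioi c, f s := by
  calc ∫⁻ s in Ioi a, f s ≤ ∫⁻ s in Ioc a b ∪ Ioc b c ∪ Ioi c, f s := lintegral_mono_set (by
        rw [Ioc_union_Ioc_eq_Ioc hab hbc, Ioc_union_Ioi_eq_Ioi (hab.trans hbc)])
    _ ≤ (∫⁻ s in Ioc a b, f s) + (∫⁻ s in Ioc b c, f s) + ∫⁻ s in Ioi c, f s :=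
        (lintegral_union_le _ _ _).trans (by gcongr; exact lintegral_union_le _ _ _)
    _ = _ := by rw [setLIntegral_congr Ioo_ae_eq_Ioc, setLIntegral_congr Ioo_ae_eq_Ioc]

section Dichotomy

variable {R : Type*} [NormedRing R]

structure PowerDichotomy (Y : ℝ → R) (x₀ C α : ℝ) (Qp Qm : R) : Prop where
  backward : ∀ x s, 0 < x → x ≤ s → s ≤ x₀ →
    ‖Y x * (Qp * Ring.inverse (Y s))‖ ≤ C * (x / s) ^ (1 + α)
  forward : ∀ x s, 0 < s → s ≤ x → x ≤ x₀ →
    ‖Y x * (Qm * Ring.inverse (Y s))‖ ≤ C * (x / s) ^ (1 - α)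

structure ExpDichotomy (Y : ℝ → R) (x₀ C γ : ℝ) (Pm Pp : R) : Prop where
  forward : ∀ x s, x₀ ≤ s → s ≤ x →
    ‖Y x * (Pm * Ring.inverse (Y s))‖ ≤ C * exp (-(γ * (x - s)))
  backward : ∀ x s, x₀ ≤ x → x ≤ s →
    ‖Y x * (Pp * Ring.inverse (Y s))‖ ≤ C * exp (-(γ * (s - x)))

variable {Y : ℝ → R} {x₀ C α γ x s : ℝ} {Qp Qm Pm Pp y a b c p r : R}

lemma norm_mul_mul_le_of_mul_eq (h : a * c = p) : ‖y * (p * r)‖ ≤ ‖y * a‖ * ‖c * r‖ := by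
  rw [← h, mul_assoc a, ← mul_assoc]
  exact norm_mul_le _ _

lemma norm_mul_mul_le_of_mul_eq_of_mul_eq (hab : a * b = b) (hbc : b * c = b) :
    ‖y * (b * r)‖ ≤ ‖y * a‖ * ‖b‖ * ‖c * r‖ := by
  rw [mul_assoc ‖y * a‖]
  refine (norm_mul_mul_le_of_mul_eq (c := b * c) (by rw [← mul_assoc, hab, hbc])).trans ?_
  rw [mul_assoc]
  exact mul_le_mul_of_nonneg_left (norm_mul_le _ _) (norm_nonneg _)

namespace PowerDichotomy

lemma nonneg (hD : PowerDichotomy Y x₀ C α Qp Qm) (hx₀ : 0 < x₀) : 0 ≤ C := by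
  simpa [div_self hx₀.ne'] using (norm_nonneg _).trans (hD.forward x₀ x₀ hx₀ le_rfl le_rfl)

lemma norm_mul_inverse_le (hD : PowerDichotomy Y x₀ C α Qp Qm) (hY : Y x₀ = 1) (hs : 0 < s)
    (hsx₀ : s ≤ x₀) :
    ‖Qm * Ring.inverse (Y s)‖ ≤ C * (x₀ / s) ^ (1 - α) := by
  simpa [hY] using hD.forward x₀ s hs hsx₀ le_rfl

lemma norm_mul_le (hD : PowerDichotomy Y x₀ C α Qp Qm) (hY : Y x₀ = 1) (hα : 0 < α) (hx : 0 < x)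
    (hxx₀ : x ≤ x₀) : ‖Y x * Qp‖ ≤ C := by
  have h := hD.backward x x₀ hx hxx₀ le_rfl
  rw [hY, Ring.inverse_one, mul_one] at h
  exact h.trans (mul_le_of_le_one_right (hD.nonneg (hx.trans_le hxx₀))
    (rpow_le_one (div_nonneg hx.le (hx.trans_le hxx₀).le) ((div_le_one (hx.trans_le hxx₀)).2 hxx₀)
      (by linarith)))

lemma norm_mul_mul_inverse_le (hD : PowerDichotomy Y x₀ C α Qp Qm) (hY : Y x₀ = 1)
    (hap : a * p = p) (hpQ : p * Qm = p) (hs : 0 < s) (hsx₀ : s ≤ x₀) :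
    ‖y * (p * Ring.inverse (Y s))‖ ≤ ‖y * a‖ * ‖p‖ * (C * (x₀ / s) ^ (1 - α)) :=
  (norm_mul_mul_le_of_mul_eq_of_mul_eq hap hpQ).trans
    (by gcongr; exact hD.norm_mul_inverse_le hY hs hsx₀)

end PowerDichotomy

namespace ExpDichotomy

lemma nonneg (hD : ExpDichotomy Y x₀ C γ Pm Pp) : 0 ≤ C := by
  simpa using (norm_nonneg _).trans (hD.forward x₀ x₀ le_rfl le_rfl)

lemma norm_mul_inverse_le (hD : ExpDichotomy Y x₀ C γ Pm Pp) (hY : Y x₀ = 1) (hs : x₀ ≤ s) :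
    ‖Pp * Ring.inverse (Y s)‖ ≤ C * exp (-(γ * (s - x₀))) := by
  simpa [hY] using hD.backward x₀ s le_rfl hs

lemma norm_mul_le (hD : ExpDichotomy Y x₀ C γ Pm Pp) (hY : Y x₀ = 1) (hγ : 0 < γ) (hx : x₀ ≤ x) :
    ‖Y x * Pm‖ ≤ C := by
  have h := hD.forward x x₀ le_rfl hx
  rw [hY, Ring.inverse_one, mul_one] at h
  exact h.trans (mul_le_of_le_one_right hD.nonneg (exp_le_one_iff.2 (by nlinarith)))

lemma norm_mul_mul_inverse_le (hD : ExpDichotomy Y x₀ C γ Pm Pp) (hY : Y x₀ = 1)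
    (hap : a * p = p) (hpP : p * Pp = p) (hs : x₀ ≤ s) :
    ‖y * (p * Ring.inverse (Y s))‖ ≤ ‖y * a‖ * ‖p‖ * (C * exp (-(γ * (s - x₀)))) :=
  (norm_mul_mul_le_of_mul_eq_of_mul_eq hap hpP).trans
    (by gcongr; exact hD.norm_mul_inverse_le hY hs)

end ExpDichotomy

end Dichotomy

section Green

variable {n : ℕ} {Y : ℝ → EuclideanSpace ℝ (Fin n) →L[ℝ] EuclideanSpace ℝ (Fin n)} {x₀ x s : ℝ}
  {P₁ P₂ P₃ P₄ P₅ P₆ : EuclideanSpace ℝ (Fin n) →L[ℝ] EuclideanSpace ℝ (Fin n)}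

lemma greenG_of_le_of_le (hs : x₀ ≤ s) (hsx : s ≤ x) :
    greenG Y x₀ P₁ P₂ P₃ P₄ P₅ P₆ x s = Y x * ((P₁ + P₂ + P₃) * Ring.inverse (Y s)) :=
  if_pos ⟨hs, hsx⟩

lemma greenG_of_le_of_lt (hsx : s ≤ x) (hs : s < x₀) :
    greenG Y x₀ P₁ P₂ P₃ P₄ P₅ P₆ x s = Y x * ((P₂ + P₃) * Ring.inverse (Y s)) := by
  rw [greenG, if_neg (fun h => hs.not_ge h.1), if_pos ⟨hsx, hs⟩]
  rfl

lemma greenG_of_lt_of_lt (hxs : x < s) (hs : s < x₀) :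
    greenG Y x₀ P₁ P₂ P₃ P₄ P₅ P₆ x s = -(Y x * ((P₁ + P₄ + P₅ + P₆) * Ring.inverse (Y s))) := by
  rw [greenG, if_neg (fun h => hs.not_ge h.1), if_neg (fun h => hxs.not_ge h.1),
    if_pos ⟨hxs, hs⟩]
  rfl

lemma greenG_of_lt_of_le (hxs : x < s) (hs : x₀ ≤ s) :
    greenG Y x₀ P₁ P₂ P₃ P₄ P₅ P₆ x s = -(Y x * ((P₄ + P₅ + P₆) * Ring.inverse (Y s))) := by
  rw [greenG, if_neg (fun h => hxs.not_ge h.2), if_neg (fun h => hxs.not_ge h.1),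
    if_neg (fun h => hs.not_gt h.2)]
  rfl

lemma norm_greenG_add_le_of_le_of_lt (hsx : s ≤ x) (hs : s < x₀) :
    ‖greenG Y x₀ P₁ P₂ P₃ P₄ P₅ P₆ x s + Y x * (P₆ * Ring.inverse (Y s))‖ ≤
      ‖Y x * ((P₂ + P₃ + P₅ + P₆) * Ring.inverse (Y s))‖ + ‖Y x * (P₅ * Ring.inverse (Y s))‖ := by
  rw [greenG_of_le_of_lt hsx hs]
  exact (congrArg norm (by noncomm_ring)).trans_le (norm_sub_le _ _)

lemma norm_greenG_add_le_of_lt_of_lt (hxs : x < s) (hs : s < x₀) :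
    ‖greenG Y x₀ P₁ P₂ P₃ P₄ P₅ P₆ x s + Y x * (P₆ * Ring.inverse (Y s))‖ ≤
      ‖Y x * ((P₁ + P₄) * Ring.inverse (Y s))‖ + ‖Y x * (P₅ * Ring.inverse (Y s))‖ := by
  rw [greenG_of_lt_of_lt hxs hs, ← norm_neg (Y x * ((P₁ + P₄) * _))]
  exact (congrArg norm (by noncomm_ring)).trans_le (norm_sub_le _ _)

lemma norm_greenG_add_le_of_lt_of_le (hxs : x < s) (hs : x₀ ≤ s) :
    ‖greenG Y x₀ P₁ P₂ P₃ P₄ P₅ P₆ x s + Y x * (P₆ * Ring.inverse (Y s))‖ ≤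
      ‖Y x * (P₄ * Ring.inverse (Y s))‖ + ‖Y x * (P₅ * Ring.inverse (Y s))‖ := by
  rw [greenG_of_lt_of_le hxs hs, ← norm_neg (Y x * (P₄ * _))]
  exact (congrArg norm (by noncomm_ring)).trans_le (norm_sub_le _ _)

variable {C₀ α Cs γ m : ℝ} {g : ℝ → EuclideanSpace ℝ (Fin n)}

lemma setLIntegral_enorm_greenG_apply_le_of_lt (hx₀ : 0 < x₀) (hx : x₀ < x) (hYx₀ : Y x₀ = 1)
    (hα : 0 < α) (hγ : 0 < γ)
    (hQ : PowerDichotomy Y x₀ C₀ α (P₁ + P₄) (P₂ + P₃ + P₅ + P₆))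
    (hP : ExpDichotomy Y x₀ Cs γ (P₁ + P₂ + P₃) (P₄ + P₅ + P₆))
    (hE : OrthogonalIdempotents ![P₁, P₂, P₃, P₄, P₅, P₆]) (hm : 0 ≤ m)
    (hg : ∀ s ∈ Ioi 0, ‖g s‖ ≤ m) :
    ∫⁻ s in Ioi 0, ‖greenG Y x₀ P₁ P₂ P₃ P₄ P₅ P₆ x s (g s)‖ₑ ≤
      ENNReal.ofReal ((Cs * C₀ * x₀ / α + 2 * Cs / γ) * m) := by
  have hC₀ := hQ.nonneg hx₀
  have hCs := hP.nonneg
  have hPQ : (P₁ + P₂ + P₃) * (P₂ + P₃ + P₅ + P₆) = P₂ + P₃ := by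
    simpa [Finset.sum_insert, add_assoc] using hE.sum_mul_sum_s14 {0, 1, 2} {1, 2, 4, 5}
  calc _ ≤ _ := setLIntegral_Ioi_le_add_add hx₀.le hx.le
    _ ≤ ENNReal.ofReal (Cs * (C₀ * (x₀ / α)) * m) + ENNReal.ofReal (Cs * (1 / γ) * m)
          + ENNReal.ofReal (Cs * (1 / γ) * m) := by
      gcongr
      · refine setLIntegral_enorm_apply_le measurableSet_Ioo hm (fun s hs => ?_)
          (fun s hs => hg s hs.1)
          (((integrableOn_Ioo_div_rpow_one_sub hα hx₀).const_mul _).const_mul _)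
          (by rw [integral_const_mul, integral_const_mul]
              gcongr; exact setIntegral_div_rpow_one_sub_le hα hx₀ le_rfl)
        rw [greenG_of_le_of_lt (hs.2.le.trans hx.le) hs.2]
        exact (norm_mul_mul_le_of_mul_eq hPQ).trans (mul_le_mul (hP.norm_mul_le hYx₀ hγ hx.le)
          (hQ.norm_mul_inverse_le hYx₀ hs.1 hs.2.le) (norm_nonneg _) hCs)
      · refine setLIntegral_enorm_apply_le measurableSet_Ioo hm (fun s hs => ?_)
          (fun s hs => hg s (hx₀.trans hs.1))
          (((integrableOn_Iic_exp_neg_mul_sub_left hγ x).mono_set fun s hs => hs.2.le).const_mul _)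
          (by rw [integral_const_mul]
              gcongr; exact setIntegral_exp_neg_mul_sub_left_le hγ fun s hs => mem_Iic.2 hs.2.le)
        rw [greenG_of_le_of_le hs.1.le hs.2.le]
        exact hP.forward x s hs.1.le hs.2.le
      · refine setLIntegral_enorm_apply_le measurableSet_Ioi hm (fun s hs => ?_)
          (fun s hs => hg s ((hx₀.trans hx).trans hs))
          ((integrableOn_Ioi_exp_neg_mul_sub_right hγ x).const_mul _)
          (by rw [integral_const_mul]
              gcongr; exact setIntegral_exp_neg_mul_sub_right_le hγ le_rfl)
        rw [greenG_of_lt_of_le hs (hx.trans hs).le, norm_neg]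
        exact hP.backward x s hx.le hs.le
    _ = _ := by
      rw [← ENNReal.ofReal_add (by positivity) (by positivity),
        ← ENNReal.ofReal_add (by positivity) (by positivity)]
      congr 1; ring

lemma setLIntegral_enorm_greenG_add_apply_tail_le_of_le {C₇ : ℝ} (hx : 0 < x) (hxx₀ : x ≤ x₀)
    (hYx₀ : Y x₀ = 1) (hα : 0 < α) (hγ : 0 < γ)
    (hQ : PowerDichotomy Y x₀ C₀ α (P₁ + P₄) (P₂ + P₃ + P₅ + P₆))
    (hP : ExpDichotomy Y x₀ Cs γ (P₁ + P₂ + P₃) (P₄ + P₅ + P₆))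
    (hE : OrthogonalIdempotents ![P₁, P₂, P₃, P₄, P₅, P₆]) (hC₇ : ‖Y x * P₅‖ ≤ C₇)
    (hm : 0 ≤ m) (hg : ∀ s ∈ Ioi 0, ‖g s‖ ≤ m) :
    ∫⁻ s in Ioi x₀,
        ‖(greenG Y x₀ P₁ P₂ P₃ P₄ P₅ P₆ x s + Y x * (P₆ * Ring.inverse (Y s))) (g s)‖ₑ ≤
      ENNReal.ofReal ((C₀ * ‖P₄‖ * (Cs * (1 / γ)) + C₇ * ‖P₅‖ * (Cs * (1 / γ))) * m) := by
  have hC₀ := hQ.nonneg (hx.trans_le hxx₀)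
  have hCs := hP.nonneg
  have hC₇₀ : 0 ≤ C₇ := (norm_nonneg _).trans hC₇
  have h₅₅ : P₅ * P₅ = P₅ := by simpa using (hE.idem 4).eq
  have h₅P : P₅ * (P₄ + P₅ + P₆) = P₅ := by
    simpa [Finset.sum_insert, add_assoc] using hE.sum_mul_sum_s14 {4} {3, 4, 5}
  have hQ₄ : (P₁ + P₄) * P₄ = P₄ := by simpa [Finset.sum_insert] using hE.sum_mul_sum_s14 {0, 3} {3}
  have h₄P : P₄ * (P₄ + P₅ + P₆) = P₄ := by
    simpa [Finset.sum_insert, add_assoc] using hE.sum_mul_sum_s14 {3} {3, 4, 5}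
  have hYQ := hQ.norm_mul_le hYx₀ hα hx hxx₀
  have hexp := (integrableOn_Ioi_exp_neg_mul_sub_right hγ x₀).const_mul Cs
  refine setLIntegral_enorm_apply_le_add measurableSet_Ioi hm (fun s hs =>
      (norm_greenG_add_le_of_lt_of_le (hxx₀.trans_lt hs) hs.le).trans (add_le_add
        ((hP.norm_mul_mul_inverse_le hYx₀ hQ₄ h₄P hs.le).trans (by gcongr))
        ((hP.norm_mul_mul_inverse_le hYx₀ h₅₅ h₅P hs.le).trans (by gcongr))))
    (fun s hs => hg s ((hx.trans_le hxx₀).trans hs)) (hexp.const_mul _) (hexp.const_mul _) ?_ ?_ <;>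
  · rw [integral_const_mul, integral_const_mul]
    gcongr
    exact setIntegral_exp_neg_mul_sub_right_le hγ le_rfl

lemma setLIntegral_enorm_greenG_add_apply_le_of_le {C₇ : ℝ} (hx : 0 < x) (hxx₀ : x ≤ x₀)
    (hYx₀ : Y x₀ = 1) (hα : 0 < α) (hγ : 0 < γ)
    (hQ : PowerDichotomy Y x₀ C₀ α (P₁ + P₄) (P₂ + P₃ + P₅ + P₆))
    (hP : ExpDichotomy Y x₀ Cs γ (P₁ + P₂ + P₃) (P₄ + P₅ + P₆))
    (hE : OrthogonalIdempotents ![P₁, P₂, P₃, P₄, P₅, P₆]) (hC₇ : ‖Y x * P₅‖ ≤ C₇)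
    (hm : 0 ≤ m) (hg : ∀ s ∈ Ioi 0, ‖g s‖ ≤ m) :
    ∫⁻ s in Ioi 0,
        ‖(greenG Y x₀ P₁ P₂ P₃ P₄ P₅ P₆ x s + Y x * (P₆ * Ring.inverse (Y s))) (g s)‖ₑ ≤
      ENNReal.ofReal ((2 * (1 + C₇ * ‖P₅‖) * C₀ * x₀ / α
        + (C₀ * ‖P₄‖ + C₇ * ‖P₅‖) * Cs / γ) * m) := by
  have hx₀ : 0 < x₀ := hx.trans_le hxx₀
  have hC₀ := hQ.nonneg hx₀
  have hCs := hP.nonneg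
  have hC₇₀ : 0 ≤ C₇ := (norm_nonneg _).trans hC₇
  have h₅₅ : P₅ * P₅ = P₅ := by simpa using (hE.idem 4).eq
  have h₅Q : P₅ * (P₂ + P₃ + P₅ + P₆) = P₅ := by
    simpa [Finset.sum_insert, add_assoc] using hE.sum_mul_sum_s14 {4} {1, 2, 4, 5}
  have hY₅ : ∀ s ∈ Ioo 0 x₀,
      ‖Y x * (P₅ * Ring.inverse (Y s))‖ ≤ C₇ * ‖P₅‖ * (C₀ * (x₀ / s) ^ (1 - α)) := fun s hs =>
    (hQ.norm_mul_mul_inverse_le hYx₀ h₅₅ h₅Q hs.1 hs.2.le).trans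
      (by have := rpow_nonneg (div_nonneg hx₀.le hs.1.le) (1 - α); gcongr)
  have hY₅int : IntegrableOn (fun s => C₇ * ‖P₅‖ * (C₀ * (x₀ / s) ^ (1 - α))) (Ioo 0 x₀) :=
    ((integrableOn_Ioo_div_rpow_one_sub hα hx₀).const_mul _).const_mul _
  have hY₅le : ∀ S ⊆ Ioo 0 x₀, ∫ s in S, C₇ * ‖P₅‖ * (C₀ * (x₀ / s) ^ (1 - α)) ≤
      C₇ * ‖P₅‖ * (C₀ * (x₀ / α)) := fun S hS => by
    rw [integral_const_mul, integral_const_mul]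
    gcongr
    exact setIntegral_div_rpow_one_sub_le hα hx₀ hS
  calc _ ≤ _ := setLIntegral_Ioi_le_add_add hx.le hxx₀
    _ ≤ ENNReal.ofReal ((C₀ * (x₀ / α) + C₇ * ‖P₅‖ * (C₀ * (x₀ / α))) * m)
          + ENNReal.ofReal ((C₀ * (x₀ / α) + C₇ * ‖P₅‖ * (C₀ * (x₀ / α))) * m)
          + ENNReal.ofReal ((C₀ * ‖P₄‖ * (Cs * (1 / γ)) + C₇ * ‖P₅‖ * (Cs * (1 / γ))) * m) := by
      gcongr
      · refine setLIntegral_enorm_apply_le_add measurableSet_Ioo hm (fun s hs =>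
          (norm_greenG_add_le_of_le_of_lt hs.2.le (hs.2.trans_le hxx₀)).trans
            (add_le_add (hQ.forward x s hs.1 hs.2.le hxx₀) (hY₅ s ⟨hs.1, hs.2.trans_le hxx₀⟩)))
          (fun s hs => hg s hs.1) ((integrableOn_Ioo_div_rpow_one_sub hα hx).const_mul _)
          (hY₅int.mono_set (Ioo_subset_Ioo_right hxx₀)) ?_ (hY₅le _ (Ioo_subset_Ioo_right hxx₀))
        rw [integral_const_mul]
        gcongr
        exact (setIntegral_div_rpow_one_sub_le hα hx le_rfl).trans (by gcongr)
      · refine setLIntegral_enorm_apply_le_add measurableSet_Ioo hm (fun s hs =>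
          (norm_greenG_add_le_of_lt_of_lt hs.1 hs.2).trans
            (add_le_add (hQ.backward x s hx hs.1.le hs.2.le) (hY₅ s ⟨hx.trans hs.1, hs.2⟩)))
          (fun s hs => hg s (hx.trans hs.1))
          (((integrableOn_Ioi_div_rpow_one_add hα hx).mono_set Ioo_subset_Ioi_self).const_mul _)
          (hY₅int.mono_set (Ioo_subset_Ioo_left hx.le)) ?_ (hY₅le _ (Ioo_subset_Ioo_left hx.le))
        rw [integral_const_mul]
        gcongr
        exact (setIntegral_div_rpow_one_add_le hα hx Ioo_subset_Ioi_self).trans (by gcongr)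
      · exact setLIntegral_enorm_greenG_add_apply_tail_le_of_le hx hxx₀ hYx₀ hα hγ hQ hP hE hC₇
          hm hg
    _ = _ := by
      rw [← ENNReal.ofReal_add (by positivity) (by positivity),
        ← ENNReal.ofReal_add (by positivity) (by positivity)]
      congr 1; ring

end Green

theorem green_integral_uniform_bound_general (n : ℕ)
    (x₀ : ℝ) (hx₀ : 0 < x₀)
    (Y : ℝ → EuclideanSpace ℝ (Fin n) →L[ℝ] EuclideanSpace ℝ (Fin n))
    (hYx₀ : Y x₀ = 1)
    (P₁ P₂ P₃ P₄ P₅ P₆ : EuclideanSpace ℝ (Fin n) →L[ℝ] EuclideanSpace ℝ (Fin n))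
    (hidem : ∀ i, ![P₁, P₂, P₃, P₄, P₅, P₆] i ∘L ![P₁, P₂, P₃, P₄, P₅, P₆] i
      = ![P₁, P₂, P₃, P₄, P₅, P₆] i)
    (hdisj : ∀ i j, i ≠ j →
      ![P₁, P₂, P₃, P₄, P₅, P₆] i ∘L ![P₁, P₂, P₃, P₄, P₅, P₆] j = 0)
    (C₀ α : ℝ) (hα : 0 < α)
    (hQp : ∀ x s : ℝ, 0 < x → x ≤ s → s ≤ x₀ →
      ‖Y x ∘L (P₁ + P₄) ∘L Ring.inverse (Y s)‖ ≤ C₀ * (x / s) ^ (1 + α))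
    (hQm : ∀ x s : ℝ, 0 < s → s ≤ x → x ≤ x₀ →
      ‖Y x ∘L (P₂ + P₃ + P₅ + P₆) ∘L Ring.inverse (Y s)‖ ≤ C₀ * (x / s) ^ (1 - α))
    (Cs γ : ℝ) (hCs : 0 < Cs) (hγ : 0 < γ)
    (hPm : ∀ x s : ℝ, x₀ ≤ s → s ≤ x →
      ‖Y x ∘L (P₁ + P₂ + P₃) ∘L Ring.inverse (Y s)‖ ≤ Cs * Real.exp (-(γ * (x - s))))
    (hPp : ∀ x s : ℝ, x₀ ≤ x → x ≤ s →
      ‖Y x ∘L (P₄ + P₅ + P₆) ∘L Ring.inverse (Y s)‖ ≤ Cs * Real.exp (-(γ * (s - x))))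
    -- the additional assumption C₇ = sup_{x ∈ (0,x₀]} ‖Y(x;x₀) P₅‖ < ∞
    (C₇ : ℝ) (hC₇ : ∀ x ∈ Set.Ioc (0 : ℝ) x₀, ‖Y x ∘L P₅‖ ≤ C₇) :
    ∃ K₁ > (0 : ℝ),
      ∀ g : ℝ → EuclideanSpace ℝ (Fin n), ∀ mg : ℝ,
        ContinuousOn g (Set.Ici 0) →
        (∀ s ≥ (0 : ℝ), ‖g s‖ ≤ mg) →
        IntegrableOn (fun s => (P₆ ∘L Ring.inverse (Y s)) (g s)) (Set.Ioi 0) →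
        (∫ s in Set.Ioi (0 : ℝ), (P₆ ∘L Ring.inverse (Y s)) (g s)) = 0 →
        ∀ x > (0 : ℝ),
          ‖∫ s in Set.Ioi (0 : ℝ), (greenG Y x₀ P₁ P₂ P₃ P₄ P₅ P₆ x s) (g s)‖
            ≤ K₁ * mg := by
  have hE : OrthogonalIdempotents ![P₁, P₂, P₃, P₄, P₅, P₆] := ⟨hidem, fun i j => hdisj i j⟩
  have hQ : PowerDichotomy Y x₀ C₀ α (P₁ + P₄) (P₂ + P₃ + P₅ + P₆) := ⟨hQp, hQm⟩
  have hP : ExpDichotomy Y x₀ Cs γ (P₁ + P₂ + P₃) (P₄ + P₅ + P₆) := ⟨hPm, hPp⟩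
  have hC₀ := hQ.nonneg hx₀
  have hC₇₀ : 0 ≤ C₇ := (norm_nonneg _).trans (hC₇ x₀ ⟨hx₀, le_rfl⟩)
  refine ⟨max (2 * (1 + C₇ * ‖P₅‖) * C₀ * x₀ / α + (C₀ * ‖P₄‖ + C₇ * ‖P₅‖) * Cs / γ)
    (Cs * C₀ * x₀ / α + 2 * Cs / γ), lt_max_of_lt_right (by positivity),
    fun g m _ hg hint hint₀ x hx => ?_⟩
  have hm : 0 ≤ m := (norm_nonneg _).trans (hg 0 le_rfl)
  have hg' : ∀ s ∈ Ioi (0 : ℝ), ‖g s‖ ≤ m := fun s hs => hg s hs.le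
  rcases le_or_gt x x₀ with hxx₀ | hxx₀
  · rw [← integral_add_eq_of_integral_eq_zero ((Y x).integrable_comp hint)
      (by rw [(Y x).integral_comp_comm hint, hint₀, map_zero])]
    refine norm_integral_le_of_lintegral_enorm_le (by positivity)
      ((setLIntegral_enorm_greenG_add_apply_le_of_le hx hxx₀ hYx₀ hα hγ hQ hP hE
        (hC₇ x ⟨hx, hxx₀⟩) hm hg').trans ?_)
    gcongr
    exact le_max_left _ _
  · refine norm_integral_le_of_lintegral_enorm_le (by positivity)
      ((setLIntegral_enorm_greenG_apply_le_of_lt hx₀ hxx₀ hYx₀ hα hγ hQ hP hE hm hg').trans ?_)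
    gcongr
    exact le_max_right _ _

/-- uniform bound `‖∫₀^∞ G(x,s) ḡ(s) ds‖ ≤ K₁ sup ‖ḡ‖` for all
continuous bounded `ḡ` satisfying the orthogonality condition
`∫₀^∞ P₆ Y(s;x₀)⁻¹ ḡ(s) ds = 0`. -/
theorem green_integral_uniform_bound (n : ℕ)
    (A : EuclideanSpace ℝ (Fin n) →L[ℝ] EuclideanSpace ℝ (Fin n))
    (B : ℝ → EuclideanSpace ℝ (Fin n) →L[ℝ] EuclideanSpace ℝ (Fin n))
    (hBcont : ContinuousOn B (Set.Ioi 0)) (hBbdd : ∃ M, ∀ x > (0 : ℝ), ‖B x‖ ≤ M)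
    (x₀ : ℝ) (hx₀ : 0 < x₀)
    (Y : ℝ → EuclideanSpace ℝ (Fin n) →L[ℝ] EuclideanSpace ℝ (Fin n))
    (hYd : ∀ x > (0 : ℝ), HasDerivAt Y ((x⁻¹ • A + B x) ∘L Y x) x)
    (hYx₀ : Y x₀ = 1) (hYu : ∀ x > (0 : ℝ), IsUnit (Y x))
    (P₁ P₂ P₃ P₄ P₅ P₆ : EuclideanSpace ℝ (Fin n) →L[ℝ] EuclideanSpace ℝ (Fin n))
    (hsum : P₁ + P₂ + P₃ + P₄ + P₅ + P₆ = 1)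
    (hidem : ∀ i, ![P₁, P₂, P₃, P₄, P₅, P₆] i ∘L ![P₁, P₂, P₃, P₄, P₅, P₆] i
      = ![P₁, P₂, P₃, P₄, P₅, P₆] i)
    (hdisj : ∀ i j, i ≠ j →
      ![P₁, P₂, P₃, P₄, P₅, P₆] i ∘L ![P₁, P₂, P₃, P₄, P₅, P₆] j = 0)
    (C₀ α : ℝ) (hC₀ : 0 < C₀) (hα : 0 < α)
    (hQp : ∀ x s : ℝ, 0 < x → x ≤ s → s ≤ x₀ →
      ‖Y x ∘L (P₁ + P₄) ∘L Ring.inverse (Y s)‖ ≤ C₀ * (x / s) ^ (1 + α))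
    (hQm : ∀ x s : ℝ, 0 < s → s ≤ x → x ≤ x₀ →
      ‖Y x ∘L (P₂ + P₃ + P₅ + P₆) ∘L Ring.inverse (Y s)‖ ≤ C₀ * (x / s) ^ (1 - α))
    (Cs γ : ℝ) (hCs : 0 < Cs) (hγ : 0 < γ)
    (hPm : ∀ x s : ℝ, x₀ ≤ s → s ≤ x →
      ‖Y x ∘L (P₁ + P₂ + P₃) ∘L Ring.inverse (Y s)‖ ≤ Cs * Real.exp (-(γ * (x - s))))
    (hPp : ∀ x s : ℝ, x₀ ≤ x → x ≤ s →
      ‖Y x ∘L (P₄ + P₅ + P₆) ∘L Ring.inverse (Y s)‖ ≤ Cs * Real.exp (-(γ * (s - x))))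
    -- the additional assumption C₇ = sup_{x ∈ (0,x₀]} ‖Y(x;x₀) P₅‖ < ∞
    (C₇ : ℝ) (hC₇ : ∀ x ∈ Set.Ioc (0 : ℝ) x₀, ‖Y x ∘L P₅‖ ≤ C₇) :
    ∃ K₁ > (0 : ℝ),
      ∀ g : ℝ → EuclideanSpace ℝ (Fin n), ∀ mg : ℝ,
        ContinuousOn g (Set.Ici 0) →
        (∀ s ≥ (0 : ℝ), ‖g s‖ ≤ mg) →
        IntegrableOn (fun s => (P₆ ∘L Ring.inverse (Y s)) (g s)) (Set.Ioi 0) →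
        (∫ s in Set.Ioi (0 : ℝ), (P₆ ∘L Ring.inverse (Y s)) (g s)) = 0 →
        ∀ x > (0 : ℝ),
          ‖∫ s in Set.Ioi (0 : ℝ), (greenG Y x₀ P₁ P₂ P₃ P₄ P₅ P₆ x s) (g s)‖
            ≤ K₁ * mg :=
  green_integral_uniform_bound_general n x₀ hx₀ Y hYx₀ P₁ P₂ P₃ P₄ P₅ P₆ hidem hdisj C₀ α hα hQp hQm
    Cs γ hCs hγ hPm hPp C₇ hC₇
end
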